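/- arXiv:2402.04956 — 4 statements merged into one kernel-verified Lean document; each statement's English description precedes it below -/
import Mathlib

section
/- Let u : ℝ → ℝ^k be a smooth 2π-periodic function. Then (-Δ)^{1/2}u(θ) · u'(θ) = 0 for every θ ∈ ℝ if and only if for every integer k ≥ 1 one has Σ_{m,n ≥ 1, m+n=k} m·n · (û(m) · û(n)) = 0. -/
open scoped Real ENNReal
open Complex MeasureTheory

noncomputable section

/-- Bilinear dot product on `ℝ^k`. -/
def dotR {k : ℕ} (a b : Fin k → ℝ) : ℝ := ∑ j, a j * b j

/-- Bilinear (non-Hermitian) dot product on `ℂ^k`. -/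
def dotC {k : ℕ} (a b : Fin k → ℂ) : ℂ := ∑ j, a j * b j

/-- Fourier coefficients of a (2π-periodic) function `u : ℝ → ℝ^k`. -/
def fCoef {k : ℕ} (u : ℝ → Fin k → ℝ) (n : ℤ) : Fin k → ℂ :=
  fun j => (1 / (2 * Real.pi) : ℂ) *
    ∫ θ in (0:ℝ)..(2 * Real.pi), (u θ j : ℂ) * Complex.exp (-(Complex.I * (n : ℂ) * (θ : ℂ)))

/-- Fourier coefficients of a (2π-periodic) scalar function. -/
def fCoefS (f : ℝ → ℝ) (n : ℤ) : ℂ :=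
  (1 / (2 * Real.pi) : ℂ) *
    ∫ θ in (0:ℝ)..(2 * Real.pi), (f θ : ℂ) * Complex.exp (-(Complex.I * (n : ℂ) * (θ : ℂ)))

/-- The half-Laplacian `(-Δ)^{1/2}` of a smooth 2π-periodic `u : ℝ → ℝ^k`. -/
def halfLap {k : ℕ} (u : ℝ → Fin k → ℝ) (θ : ℝ) : Fin k → ℝ :=
  fun j => (∑' n : ℤ, ((|n| : ℤ) : ℂ) * fCoef u n j * Complex.exp (Complex.I * (n : ℂ) * (θ : ℂ))).re

/-- The fractional Laplacian `(-Δ)^s` of a smooth 2π-periodic scalar function. -/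
def fracLapS (s : ℝ) (f : ℝ → ℝ) (θ : ℝ) : ℝ :=
  (∑' n : ℤ, ((|(n : ℝ)| ^ (2 * s) : ℝ) : ℂ) * fCoefS f n *
    Complex.exp (Complex.I * (n : ℂ) * (θ : ℂ))).re

/-- The Hilbert transform of a smooth 2π-periodic scalar function. -/
def hilbertT (f : ℝ → ℝ) (θ : ℝ) : ℝ :=
  (∑' n : ℤ, (-Complex.I) * ((n.sign : ℤ) : ℂ) * fCoefS f n *
    Complex.exp (Complex.I * (n : ℂ) * (θ : ℂ))).re

/-- The half Dirichlet energy of a 2π-periodic function `u : ℝ → ℝ^k`. -/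
def energy {k : ℕ} (u : ℝ → Fin k → ℝ) : ℝ≥0∞ :=
  ENNReal.ofReal (1 / (2 * Real.pi)) *
    ∫⁻ p : ℝ × ℝ in (Set.Ioc 0 (2 * Real.pi)) ×ˢ (Set.Ioc 0 (2 * Real.pi)),
      ENNReal.ofReal ((∑ j, (u p.1 j - u p.2 j) ^ 2) /
        ‖Complex.exp (Complex.I * (p.1 : ℂ)) - Complex.exp (Complex.I * (p.2 : ℂ))‖ ^ 2)

/-- The harmonic extension of `u` to the unit disc, evaluated at `z`. -/
def harmExt {k : ℕ} (u : ℝ → Fin k → ℝ) (z : ℂ) : Fin k → ℝ :=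
  fun j => (∑' n : ℤ,
    fCoef u n j * (if 0 ≤ n then z ^ n.toNat else (starRingEnd ℂ z) ^ (-n).toNat)).re

lemma two_pi_pos' : (0:ℝ) < 2 * Real.pi := by positivity

/-- explicit formula for fourierCoeffOn on [0, 2π] -/
lemma coefC_eq (f : ℝ → ℂ) (n : ℤ) :
    fourierCoeffOn two_pi_pos' f n =
      (1 / (2 * Real.pi) : ℂ) *
        ∫ θ in (0:ℝ)..(2 * Real.pi), f θ * Complex.exp (-(Complex.I * (n : ℂ) * (θ : ℂ))) := by
  rw [fourierCoeffOn_eq_integral, sub_zero]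
  rw [intervalIntegral.integral_congr (g := fun θ : ℝ =>
      f θ * Complex.exp (-(Complex.I * (n : ℂ) * (θ : ℂ))))]
  · rw [real_smul]
    push_cast
    ring_nf
  · intro x _
    simp only [fourier_coe_apply, smul_eq_mul]
    rw [mul_comm]
    congr 2
    have hπ : (Real.pi : ℂ) ≠ 0 := Complex.ofReal_ne_zero.mpr Real.pi_ne_zero
    push_cast
    field_simp

lemma fCoef_eq_coef {k : ℕ} (u : ℝ → Fin k → ℝ) (n : ℤ) (j : Fin k) :
    fCoef u n j = fourierCoeffOn two_pi_pos' (fun θ => (u θ j : ℂ)) n := by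
  rw [coefC_eq, fCoef]

lemma norm_fourier_le_one {T : ℝ} (n : ℤ) (x : AddCircle T) : ‖fourier n x‖ = 1 := by
  rw [fourier_apply]; exact Circle.norm_coe _

/-- bound on fourierCoeffOn -/
lemma norm_coefC_le {f : ℝ → ℂ} {M : ℝ} (hf : ∀ x ∈ Set.Icc (0:ℝ) (2*Real.pi), ‖f x‖ ≤ M)
    (n : ℤ) : ‖fourierCoeffOn two_pi_pos' f n‖ ≤ M := by
  rw [fourierCoeffOn_eq_integral, norm_smul]
  have h1 : ‖∫ x in (0:ℝ)..(2*Real.pi), fourier (-n) (x : AddCircle (2*Real.pi - 0)) • f x‖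
      ≤ M * |2 * Real.pi - 0| := by
    apply intervalIntegral.norm_integral_le_of_norm_le_const
    intro x hx
    rw [Set.uIoc_of_le two_pi_pos'.le] at hx
    rw [norm_smul, norm_fourier_le_one, one_mul]
    exact hf x ⟨hx.1.le, hx.2⟩
  calc ‖(1:ℝ)/(2*Real.pi - 0)‖ * ‖∫ x in (0:ℝ)..(2*Real.pi), fourier (-n) (x : AddCircle (2*Real.pi - 0)) • f x‖
      ≤ ‖(1:ℝ)/(2*Real.pi - 0)‖ * (M * |2*Real.pi - 0|) := by gcongr
    _ = M := by
        rw [sub_zero, abs_of_pos two_pi_pos', Real.norm_eq_abs, abs_of_pos (by positivity)]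
        field_simp
lemma periodic_deriv' {F : Type*} [NormedAddCommGroup F] [NormedSpace ℝ F]
    {f : ℝ → F} {c : ℝ} (h : Function.Periodic f c) : Function.Periodic (deriv f) c := by
  intro x
  have : (fun y => f (y + c)) = f := funext h
  rw [← deriv_comp_add_const]
  rw [this]

lemma conj_intervalIntegral (f : ℝ → ℂ) (a b : ℝ) (h : a ≤ b) :
    (starRingEnd ℂ) (∫ x in a..b, f x) = ∫ x in a..b, (starRingEnd ℂ) (f x) := by
  rw [intervalIntegral.integral_of_le h, intervalIntegral.integral_of_le h, integral_conj]

lemma coefC_real_neg_conj (g : ℝ → ℝ) (n : ℤ) :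
    fourierCoeffOn two_pi_pos' (fun θ => (g θ : ℂ)) (-n) =
      (starRingEnd ℂ) (fourierCoeffOn two_pi_pos' (fun θ => (g θ : ℂ)) n) := by
  rw [coefC_eq, coefC_eq, map_mul, conj_intervalIntegral _ _ _ two_pi_pos'.le]
  congr 1
  · rw [eq_comm, Complex.conj_eq_iff_im]
    simp
  · apply intervalIntegral.integral_congr
    intro x _
    show (g x : ℂ) * Complex.exp (-(Complex.I * ((-n : ℤ):ℂ) * x)) =
      (starRingEnd ℂ) ((g x : ℂ) * Complex.exp (-(Complex.I * (n:ℂ) * x)))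
    rw [map_mul, ← Complex.exp_conj, Complex.conj_ofReal]
    congr 2
    simp only [map_neg, map_mul, Complex.conj_I, Complex.conj_ofReal, map_intCast]
    push_cast
    ring

lemma fCoef_neg {k : ℕ} (u : ℝ → Fin k → ℝ) (n : ℤ) (j : Fin k) :
    fCoef u (-n) j = (starRingEnd ℂ) (fCoef u n j) := by
  rw [fCoef_eq_coef, fCoef_eq_coef, coefC_real_neg_conj]

/-- Fourier coefficient of the derivative. -/
lemma coefC_deriv {f g : ℝ → ℂ} (hf : ∀ x, HasDerivAt f (g x) x) (hg : Continuous g)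
    (hp : f (2 * Real.pi) = f 0) (n : ℤ) :
    fourierCoeffOn two_pi_pos' g n = Complex.I * n * fourierCoeffOn two_pi_pos' f n := by
  rcases eq_or_ne n 0 with rfl | hn
  · simp only [Int.cast_zero, mul_zero, zero_mul]
    rw [coefC_eq]
    have h0 : ∫ θ in (0:ℝ)..(2*Real.pi), g θ * Complex.exp (-(Complex.I * ((0:ℤ):ℂ) * θ)) =
        ∫ θ in (0:ℝ)..(2*Real.pi), g θ := by
      apply intervalIntegral.integral_congr
      intro x _
      simp
    rw [h0, intervalIntegral.integral_eq_sub_of_hasDerivAt (fun x _ => hf x)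
      (hg.intervalIntegrable _ _), hp, sub_self, mul_zero]
  · have h := fourierCoeffOn_of_hasDerivAt two_pi_pos' hn (fun x _ => hf x)
      (hg.intervalIntegrable _ _)
    rw [hp, sub_self, mul_zero, zero_sub] at h
    rw [h]
    have hπ : (Real.pi : ℂ) ≠ 0 := Complex.ofReal_ne_zero.mpr Real.pi_ne_zero
    have hn' : (n:ℂ) ≠ 0 := Int.cast_ne_zero.mpr hn
    have hI : Complex.I ≠ 0 := Complex.I_ne_zero
    push_cast
    field_simp
    ring
example (n : ℤ) : ‖((n:ℤ):ℂ)‖ = |(n:ℝ)| := by simp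
example (n : ℤ) (c : ℂ) : ‖(Complex.I * n)^3 * c‖ = |(n:ℝ)|^3 * ‖c‖ := by
  simp [norm_mul, norm_pow, Complex.norm_I]

lemma coefC_deriv_real {f : ℝ → ℝ} (hf : ContDiff ℝ ((⊤:ℕ∞) : WithTop ℕ∞) f)
    (hp : Function.Periodic f (2 * Real.pi)) (n : ℤ) :
    fourierCoeffOn two_pi_pos' (fun θ => ((deriv f θ : ℝ) : ℂ)) n =
      Complex.I * n * fourierCoeffOn two_pi_pos' (fun θ => ((f θ : ℝ) : ℂ)) n := by
  apply coefC_deriv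
  · intro x
    exact ((hf.differentiable (by simp) x).hasDerivAt).ofReal_comp
  · exact Complex.continuous_ofReal.comp (contDiff_infty_iff_deriv.mp hf).2.continuous
  · exact_mod_cast congrArg (fun t => ((t:ℝ):ℂ)) (by simpa using hp 0)

lemma summable_decay {k : ℕ} (u : ℝ → Fin k → ℝ) (hu : ContDiff ℝ (⊤ : ℕ∞) u)
    (hper : Function.Periodic u (2 * Real.pi)) (j : Fin k) :
    Summable (fun n : ℤ => (|n| : ℝ) * ‖fCoef u n j‖) := by
  set f : ℝ → ℝ := fun θ => u θ j with hfdef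
  have hf : ContDiff ℝ ((⊤:ℕ∞) : WithTop ℕ∞) f := ((contDiff_pi.mp hu) j).of_le (by simp)
  have hp : Function.Periodic f (2 * Real.pi) := fun x => congrFun (hper x) j
  have hf1 : ContDiff ℝ ((⊤:ℕ∞) : WithTop ℕ∞) (deriv f) := (contDiff_infty_iff_deriv.mp hf).2
  have hp1 : Function.Periodic (deriv f) _ := periodic_deriv' hp
  have hf2 : ContDiff ℝ ((⊤:ℕ∞) : WithTop ℕ∞) (deriv (deriv f)) := (contDiff_infty_iff_deriv.mp hf1).2
  have hp2 : Function.Periodic (deriv (deriv f)) _ := periodic_deriv' hp1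
  have key : ∀ n : ℤ, fourierCoeffOn two_pi_pos'
      (fun θ => ((deriv (deriv (deriv f)) θ : ℝ) : ℂ)) n = (Complex.I * n)^3 * fCoef u n j := by
    intro n
    rw [coefC_deriv_real hf2 hp2 n, coefC_deriv_real hf1 hp1 n, coefC_deriv_real hf hp n,
      fCoef_eq_coef]
    ring
  obtain ⟨M, hM⟩ := (isCompact_Icc (a := (0:ℝ)) (b := 2*Real.pi)).exists_bound_of_continuousOn
    (Complex.continuous_ofReal.comp (contDiff_infty_iff_deriv.mp hf2).2.continuous).continuousOn
  have hbound : ∀ n : ℤ, |(n:ℝ)|^3 * ‖fCoef u n j‖ ≤ M := by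
    intro n
    have h := norm_coefC_le (f := fun θ => ((deriv (deriv (deriv f)) θ : ℝ) : ℂ)) (M := M) hM n
    rw [key n] at h
    simpa [norm_mul, norm_pow, Complex.norm_I] using h
  apply Summable.of_nonneg_of_le (fun n => by positivity) (fun n => ?_)
    ((Real.summable_one_div_int_pow.mpr (by norm_num : 1 < 2)).mul_left M)
  rcases eq_or_ne n 0 with rfl | hn
  · simp
  · have h2 : (0:ℝ) < (n:ℝ)^2 := by
      have : ((n:ℝ)) ≠ 0 := Int.cast_ne_zero.mpr hn
      positivity
    rw [mul_one_div, le_div_iff₀ h2]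
    calc |(n:ℝ)| * ‖fCoef u n j‖ * (n:ℝ)^2 = |(n:ℝ)|^3 * ‖fCoef u n j‖ := by
          rw [← _root_.sq_abs]; ring
      _ ≤ M := hbound n
/-- The complex half-Laplacian series. -/
def Hc {k : ℕ} (u : ℝ → Fin k → ℝ) (j : Fin k) (θ : ℝ) : ℂ :=
  ∑' n : ℤ, ((|n| : ℤ) : ℂ) * fCoef u n j * Complex.exp (Complex.I * (n : ℂ) * (θ : ℂ))

lemma halfLap_re {k : ℕ} (u : ℝ → Fin k → ℝ) (θ : ℝ) (j : Fin k) :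
    halfLap u θ j = (Hc u j θ).re := rfl

lemma norm_exp_I_mul (n : ℤ) (θ : ℝ) : ‖Complex.exp (Complex.I * (n : ℂ) * (θ : ℂ))‖ = 1 := by
  rw [Complex.norm_exp]
  simp [Complex.mul_re]

lemma norm_Hterm {k : ℕ} (u : ℝ → Fin k → ℝ) (j : Fin k) (n : ℤ) (θ : ℝ) :
    ‖((|n| : ℤ) : ℂ) * fCoef u n j * Complex.exp (Complex.I * (n : ℂ) * (θ : ℂ))‖
      = (|n| : ℝ) * ‖fCoef u n j‖ := by
  rw [norm_mul, norm_mul, norm_exp_I_mul, mul_one]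
  congr 1
  simp

lemma summable_Hterm {k : ℕ} (u : ℝ → Fin k → ℝ) (hu : ContDiff ℝ (⊤ : ℕ∞) u)
    (hper : Function.Periodic u (2 * Real.pi)) (j : Fin k) (θ : ℝ) :
    Summable (fun n : ℤ =>
      ((|n| : ℤ) : ℂ) * fCoef u n j * Complex.exp (Complex.I * (n : ℂ) * (θ : ℂ))) := by
  apply Summable.of_norm
  apply ((summable_decay u hu hper j).congr (fun n => (norm_Hterm u j n θ).symm))

lemma Hc_conj {k : ℕ} (u : ℝ → Fin k → ℝ) (j : Fin k) (θ : ℝ) :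
    (starRingEnd ℂ) (Hc u j θ) = Hc u j θ := by
  rw [Hc, ← Complex.star_def, tsum_star]
  have h : ∀ n : ℤ, star (((|n| : ℤ) : ℂ) * fCoef u n j * Complex.exp (Complex.I * (n : ℂ) * θ))
      = (fun m : ℤ => ((|m| : ℤ) : ℂ) * fCoef u m j *
          Complex.exp (Complex.I * (m : ℂ) * θ)) (-n) := by
    intro n
    rw [Complex.star_def, map_mul, map_mul, ← Complex.exp_conj]
    rw [← fCoef_neg]
    congr 1
    · congr 1
      · simp
    · congr 1
      simp only [map_mul, Complex.conj_I, Complex.conj_ofReal, map_intCast]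
      push_cast
      ring
  have e := (Equiv.neg ℤ).tsum_eq (fun m : ℤ => ((|m| : ℤ) : ℂ) * fCoef u m j *
    Complex.exp (Complex.I * (m : ℂ) * θ))
  simp only [Equiv.neg_apply] at e
  exact (tsum_congr h).trans e

lemma halfLap_complex {k : ℕ} (u : ℝ → Fin k → ℝ) (θ : ℝ) (j : Fin k) :
    ((halfLap u θ j : ℝ) : ℂ) = Hc u j θ := by
  rw [halfLap_re]
  exact Complex.conj_eq_iff_re.mp (Hc_conj u j θ)

lemma continuous_Hc {k : ℕ} (u : ℝ → Fin k → ℝ) (hu : ContDiff ℝ (⊤ : ℕ∞) u)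
    (hper : Function.Periodic u (2 * Real.pi)) (j : Fin k) :
    Continuous (Hc u j) := by
  apply continuous_tsum
  · intro n
    exact continuous_const.mul (Complex.continuous_exp.comp
      (continuous_const.mul Complex.continuous_ofReal))
  · exact summable_decay u hu hper j
  · intro n θ
    exact le_of_eq (norm_Hterm u j n θ)

lemma Hc_periodic {k : ℕ} (u : ℝ → Fin k → ℝ) (j : Fin k) :
    Function.Periodic (Hc u j) (2 * Real.pi) := by
  intro θ
  rw [Hc, Hc]
  apply tsum_congr
  intro n
  congr 1
  have h : (Complex.I * (n : ℂ) * ((θ + 2 * Real.pi : ℝ) : ℂ))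
      = Complex.I * (n : ℂ) * (θ : ℂ) + (n : ℂ) * (2 * (Real.pi : ℂ) * Complex.I) := by
    push_cast; ring
  rw [h, Complex.exp_add, Complex.exp_int_mul_two_pi_mul_I, mul_one]

lemma deriv_apply' {k : ℕ} (u : ℝ → Fin k → ℝ) (hu : ContDiff ℝ (⊤ : ℕ∞) u) (θ : ℝ) (j : Fin k) :
    deriv u θ j = deriv (fun t => u t j) θ := by
  have hd : HasDerivAt u (deriv u θ) θ :=
    (hu.differentiable (by simp) θ).hasDerivAt
  exact ((hasDerivAt_pi.mp hd) j).deriv.symm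

/-- The complexified stationarity function. -/
def Gfun {k : ℕ} (u : ℝ → Fin k → ℝ) (θ : ℝ) : ℂ :=
  ∑ j, Hc u j θ * ((deriv (fun t => u t j) θ : ℝ) : ℂ)

lemma G_eq_dot {k : ℕ} (u : ℝ → Fin k → ℝ) (hu : ContDiff ℝ (⊤ : ℕ∞) u) (θ : ℝ) :
    ((dotR (halfLap u θ) (deriv u θ) : ℝ) : ℂ) = Gfun u θ := by
  rw [dotR, Gfun]
  push_cast
  apply Finset.sum_congr rfl
  intro j _
  rw [halfLap_complex, deriv_apply' u hu θ j]
lemma continuous_periodic_lift {f : ℝ → ℂ} {c : ℝ} (h : Function.Periodic f c) (hc : Continuous f) :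
    Continuous h.lift := by
  unfold Function.Periodic.lift
  exact hc.quotient_liftOn' _

lemma coef_deriv_u {k : ℕ} (u : ℝ → Fin k → ℝ) (hu : ContDiff ℝ (⊤ : ℕ∞) u)
    (hper : Function.Periodic u (2 * Real.pi)) (j : Fin k) (n : ℤ) :
    fourierCoeffOn two_pi_pos' (fun θ => ((deriv (fun t => u t j) θ : ℝ) : ℂ)) n
      = Complex.I * n * fCoef u n j := by
  rw [coefC_deriv_real ((contDiff_pi.mp hu j).of_le (by simp))
    (fun x => congrFun (hper x) j) n, fCoef_eq_coef]

lemma continuous_uj {k : ℕ} (u : ℝ → Fin k → ℝ) (hu : ContDiff ℝ (⊤ : ℕ∞) u) (j : Fin k) :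
    Continuous (fun θ => ((deriv (fun t => u t j) θ : ℝ) : ℂ)) :=
  Complex.continuous_ofReal.comp
    (contDiff_infty_iff_deriv.mp ((contDiff_pi.mp hu j).of_le (by simp))).2.continuous

/-- The key swap: Fourier coefficient of `Hc_j * u'_j`. -/
lemma inner_int {k : ℕ} (u : ℝ → Fin k → ℝ) (hu : ContDiff ℝ (⊤ : ℕ∞) u)
    (hper : Function.Periodic u (2 * Real.pi)) (j : Fin k) (K : ℤ) :
    (1 / (2 * Real.pi) : ℂ) * ∫ θ in (0:ℝ)..(2*Real.pi),
        Hc u j θ * (((deriv (fun t => u t j) θ : ℝ) : ℂ)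
          * Complex.exp (-(Complex.I * (K:ℂ) * (θ:ℂ))))
      = ∑' n : ℤ, ((|n| : ℤ) : ℂ) * fCoef u n j
          * (Complex.I * ((K - n : ℤ) : ℂ) * fCoef u (K - n) j) := by
  set v : ℝ → ℂ := fun θ => ((deriv (fun t => u t j) θ : ℝ) : ℂ) with hv
  have hvcont : Continuous v := continuous_uj u hu j
  set w : ℝ → ℂ := fun θ => v θ * Complex.exp (-(Complex.I * (K:ℂ) * (θ:ℂ))) with hw
  have hwcont : Continuous w := by
    apply hvcont.mul
    exact Complex.continuous_exp.comp
      ((continuous_const.mul Complex.continuous_ofReal).neg)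
  set F : ℤ → ℝ → ℂ := fun n θ =>
    (((|n| : ℤ) : ℂ) * fCoef u n j * Complex.exp (Complex.I * (n : ℂ) * (θ:ℂ))) * w θ with hF
  have hFcont : ∀ n, Continuous (F n) := by
    intro n
    exact (continuous_const.mul (Complex.continuous_exp.comp
      (continuous_const.mul Complex.continuous_ofReal))).mul hwcont
  have hFnorm : ∀ n θ, ‖F n θ‖ = ((|n| : ℝ) * ‖fCoef u n j‖) * ‖w θ‖ := by
    intro n θ
    rw [hF, norm_mul, norm_Hterm]
  -- pointwise expansion of the integrand
  have hpt : ∀ θ ∈ Set.uIcc (0:ℝ) (2*Real.pi), Hc u j θ * w θ = ∑' n : ℤ, F n θ := by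
    intro θ _
    rw [Hc, ← tsum_mul_right]
  rw [intervalIntegral.integral_congr hpt]
  rw [intervalIntegral.integral_of_le two_pi_pos'.le]
  have hint : ∀ n : ℤ, Integrable (F n) (volume.restrict (Set.Ioc (0:ℝ) (2*Real.pi))) :=
    fun n => (hFcont n).integrableOn_Ioc
  have hsum : Summable (fun n : ℤ => ∫ θ in Set.Ioc (0:ℝ) (2*Real.pi), ‖F n θ‖) := by
    have : (fun n : ℤ => ∫ θ in Set.Ioc (0:ℝ) (2*Real.pi), ‖F n θ‖)
        = fun n : ℤ => ((|n| : ℝ) * ‖fCoef u n j‖)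
            * ∫ θ in Set.Ioc (0:ℝ) (2*Real.pi), ‖w θ‖ := by
      funext n
      simp_rw [hFnorm]
      exact integral_const_mul _ _
    rw [this]
    exact (summable_decay u hu hper j).mul_right _
  rw [← integral_tsum_of_summable_integral_norm hint hsum]
  rw [← tsum_mul_left]
  apply tsum_congr
  intro n
  -- per-term evaluation
  have hterm : ∀ θ : ℝ, F n θ = ((|n| : ℤ) : ℂ) * fCoef u n j
      * (v θ * Complex.exp (-(Complex.I * ((K - n : ℤ) : ℂ) * (θ:ℂ)))) := by
    intro θ
    rw [hF, hw]
    have : Complex.exp (Complex.I * (n : ℂ) * (θ:ℂ)) *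
        Complex.exp (-(Complex.I * (K:ℂ) * (θ:ℂ)))
        = Complex.exp (-(Complex.I * ((K - n : ℤ) : ℂ) * (θ:ℂ))) := by
      rw [← Complex.exp_add]
      congr 1
      push_cast
      ring
    calc (((|n| : ℤ) : ℂ) * fCoef u n j * Complex.exp (Complex.I * (n : ℂ) * (θ:ℂ))) *
          (v θ * Complex.exp (-(Complex.I * (K:ℂ) * (θ:ℂ))))
        = ((|n| : ℤ) : ℂ) * fCoef u n j * (v θ *
            (Complex.exp (Complex.I * (n : ℂ) * (θ:ℂ)) *
              Complex.exp (-(Complex.I * (K:ℂ) * (θ:ℂ))))) := by ring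
      _ = _ := by rw [this]
  simp_rw [hterm]
  rw [integral_const_mul]
  rw [← coef_deriv_u u hu hper j (K - n), coefC_eq]
  rw [← intervalIntegral.integral_of_le two_pi_pos'.le]
  ring
lemma dot_term_summable {k : ℕ} (u : ℝ → Fin k → ℝ) (hu : ContDiff ℝ (⊤ : ℕ∞) u)
    (hper : Function.Periodic u (2 * Real.pi)) (j : Fin k) (K : ℤ) :
    Summable (fun n : ℤ => ((|n| : ℤ) : ℂ) * fCoef u n j
      * (Complex.I * ((K - n : ℤ) : ℂ) * fCoef u (K - n) j)) := by
  set s : ℤ → ℝ := fun n => (|n| : ℝ) * ‖fCoef u n j‖ with hs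
  have hsm : Summable s := summable_decay u hu hper j
  set B : ℝ := ∑' n, s n with hB
  have hle : ∀ m : ℤ, s m ≤ B := fun m => hsm.le_tsum m (fun m' _ => by positivity)
  apply Summable.of_norm_bounded (g := fun n => s n * B) (hsm.mul_right B)
  intro n
  have : ‖((|n| : ℤ) : ℂ) * fCoef u n j * (Complex.I * ((K - n : ℤ) : ℂ) * fCoef u (K - n) j)‖
      = s n * s (K - n) := by
    simp only [norm_mul, Complex.norm_I, one_mul, Complex.norm_intCast, Int.cast_abs,
      abs_abs, hs]
  rw [this]
  have h0 : 0 ≤ s n := by positivity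
  exact mul_le_mul_of_nonneg_left (hle (K - n)) h0

lemma coef_G {k : ℕ} (u : ℝ → Fin k → ℝ) (hu : ContDiff ℝ (⊤ : ℕ∞) u)
    (hper : Function.Periodic u (2 * Real.pi)) (K : ℤ) :
    fourierCoeffOn two_pi_pos' (Gfun u) K
      = Complex.I * ∑' n : ℤ, ((|n| : ℤ) : ℂ) * ((K - n : ℤ) : ℂ)
          * dotC (fCoef u n) (fCoef u (K - n)) := by
  rw [coefC_eq]
  have hpt : ∀ θ ∈ Set.uIcc (0:ℝ) (2*Real.pi),
      Gfun u θ * Complex.exp (-(Complex.I * (K:ℂ) * (θ:ℂ)))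
        = ∑ j, Hc u j θ * (((deriv (fun t => u t j) θ : ℝ) : ℂ)
            * Complex.exp (-(Complex.I * (K:ℂ) * (θ:ℂ)))) := by
    intro θ _
    rw [Gfun, Finset.sum_mul]
    apply Finset.sum_congr rfl
    intros
    ring
  rw [intervalIntegral.integral_congr hpt]
  rw [intervalIntegral.integral_finset_sum]
  · rw [Finset.mul_sum]
    rw [Finset.sum_congr rfl (fun j _ => inner_int u hu hper j K)]
    rw [← Summable.tsum_finsetSum (fun j _ => dot_term_summable u hu hper j K)]
    rw [← tsum_mul_left]
    apply tsum_congr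
    intro n
    rw [dotC, Finset.mul_sum, Finset.mul_sum]
    apply Finset.sum_congr rfl
    intros
    ring
  · intro j _
    apply Continuous.intervalIntegrable
    exact (continuous_Hc u hu hper j).mul ((continuous_uj u hu j).mul
      (Complex.continuous_exp.comp ((continuous_const.mul Complex.continuous_ofReal).neg)))

lemma sym_tsum (d : ℤ → ℂ) (K : ℤ) (hK : 0 ≤ K) (hd : ∀ n, d (K - n) = d n)
    (hs : Summable (fun n : ℤ => ((|n| : ℤ) : ℂ) * ((K - n : ℤ) : ℂ) * d n)) :
    ∑' n : ℤ, ((|n| : ℤ) : ℂ) * ((K - n : ℤ) : ℂ) * d n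
      = ∑ n ∈ Finset.Ico (1:ℤ) K, (n : ℂ) * ((K - n : ℤ) : ℂ) * d n := by
  set F : ℤ → ℂ := fun n => ((|n| : ℤ) : ℂ) * ((K - n : ℤ) : ℂ) * d n with hFdef
  have hs' : Summable (fun n => F (K - n)) := ((Equiv.subLeft K).summable_iff (f := F)).mpr hs
  have hrev : ∑' n, F (K - n) = ∑' n, F n := (Equiv.subLeft K).tsum_eq F
  have h2 : (2:ℂ) * ∑' n, F n = ∑' n, (F n + F (K - n)) := by
    rw [Summable.tsum_add hs hs', hrev]
    ring
  have hG : ∀ n : ℤ, F n + F (K - n) = ((|n| * (K - n) + |K - n| * n : ℤ) : ℂ) * d n := by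
    intro n
    rw [hFdef]
    simp only []
    rw [hd n]
    push_cast
    ring
  have hvanish : ∀ n ∉ Finset.Ico (1:ℤ) K,
      ((|n| * (K - n) + |K - n| * n : ℤ) : ℂ) * d n = 0 := by
    intro n hn
    simp only [Finset.mem_Ico, not_and, not_lt] at hn
    have hz : |n| * (K - n) + |K - n| * n = 0 := by
      rcases le_or_gt n 0 with h | h
      · rw [abs_of_nonpos h, abs_of_nonneg (by omega : (0:ℤ) ≤ K - n)]
        ring
      · have hKn : K ≤ n := hn (by omega)
        rw [abs_of_pos h, abs_of_nonpos (by omega : K - n ≤ 0)]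
        ring
    rw [hz]
    simp
  have hval : ∀ n ∈ Finset.Ico (1:ℤ) K,
      ((|n| * (K - n) + |K - n| * n : ℤ) : ℂ) * d n
        = 2 * ((n : ℂ) * ((K - n : ℤ) : ℂ) * d n) := by
    intro n hn
    simp only [Finset.mem_Ico] at hn
    rw [abs_of_pos (by omega : (0:ℤ) < n), abs_of_nonneg (by omega : (0:ℤ) ≤ K - n)]
    push_cast
    ring
  apply mul_left_cancel₀ (two_ne_zero (α := ℂ))
  rw [h2, tsum_congr hG, tsum_eq_sum hvanish, Finset.sum_congr rfl hval, ← Finset.mul_sum]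
lemma dotC_comm {k : ℕ} (a b : Fin k → ℂ) : dotC a b = dotC b a := by
  rw [dotC, dotC]
  exact Finset.sum_congr rfl fun j _ => mul_comm _ _

lemma summable_F {k : ℕ} (u : ℝ → Fin k → ℝ) (hu : ContDiff ℝ (⊤ : ℕ∞) u)
    (hper : Function.Periodic u (2 * Real.pi)) (K : ℤ) :
    Summable (fun n : ℤ => ((|n| : ℤ) : ℂ) * ((K - n : ℤ) : ℂ)
      * dotC (fCoef u n) (fCoef u (K - n))) := by
  have hj : ∀ j : Fin k, Summable (fun n : ℤ =>
      ((|n| : ℤ) : ℂ) * ((K - n : ℤ) : ℂ) * (fCoef u n j * fCoef u (K - n) j)) := by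
    intro j
    apply ((dot_term_summable u hu hper j K).mul_left (-Complex.I)).congr
    intro n
    have : Complex.I * Complex.I = -1 := Complex.I_mul_I
    field_simp
    ring_nf
    rw [Complex.I_sq]
    ring
  apply (summable_sum (f := fun (j : Fin k) (n : ℤ) =>
    ((|n| : ℤ) : ℂ) * ((K - n : ℤ) : ℂ) * (fCoef u n j * fCoef u (K - n) j))
    (fun j _ => hj j)).congr
  intro n
  rw [dotC, Finset.mul_sum]

lemma coefG_eq_finsum {k : ℕ} (u : ℝ → Fin k → ℝ) (hu : ContDiff ℝ (⊤ : ℕ∞) u)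
    (hper : Function.Periodic u (2 * Real.pi)) (K : ℤ) (hK : 0 ≤ K) :
    fourierCoeffOn two_pi_pos' (Gfun u) K = Complex.I *
      ∑ n ∈ Finset.Ico (1:ℤ) K, (n : ℂ) * ((K - n : ℤ) : ℂ)
        * dotC (fCoef u n) (fCoef u (K - n)) := by
  rw [coef_G u hu hper K]
  congr 1
  exact sym_tsum (fun n => dotC (fCoef u n) (fCoef u (K - n))) K hK
    (fun n => by
      show dotC (fCoef u (K - n)) (fCoef u (K - (K - n))) = dotC (fCoef u n) (fCoef u (K - n))
      rw [sub_sub_cancel]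
      exact dotC_comm _ _)
    (summable_F u hu hper K)

lemma fourierCoeff_circ_eq {F : AddCircle (2 * Real.pi) → ℂ} (K : ℤ) :
    haveI : Fact (0 < 2 * Real.pi) := ⟨two_pi_pos'⟩
    fourierCoeff F K = (1 / (2 * Real.pi) : ℂ) *
      ∫ θ in (0:ℝ)..(2 * Real.pi), F θ * Complex.exp (-(Complex.I * (K : ℂ) * (θ : ℂ))) := by
  haveI : Fact (0 < 2 * Real.pi) := ⟨two_pi_pos'⟩
  rw [fourierCoeff_eq_intervalIntegral F K 0, zero_add]
  rw [intervalIntegral.integral_congr (g := fun θ : ℝ =>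
      F θ * Complex.exp (-(Complex.I * (K : ℂ) * (θ : ℂ))))]
  · rw [real_smul]
    push_cast
    ring_nf
  · intro x _
    show fourier (-K) (x : AddCircle (2 * Real.pi)) • F x = _
    rw [smul_eq_mul, mul_comm, fourier_coe_apply]
    congr 2
    have hπ : (Real.pi : ℂ) ≠ 0 := Complex.ofReal_ne_zero.mpr Real.pi_ne_zero
    push_cast
    field_simp

lemma G_vanish {k : ℕ} (u : ℝ → Fin k → ℝ) (hu : ContDiff ℝ (⊤ : ℕ∞) u)
    (hper : Function.Periodic u (2 * Real.pi))
    (hc : ∀ K : ℤ, fourierCoeffOn two_pi_pos' (Gfun u) K = 0) (θ : ℝ) : Gfun u θ = 0 := by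
  have hGcont : Continuous (Gfun u) := by
    apply continuous_finset_sum
    intro j _
    exact (continuous_Hc u hu hper j).mul (continuous_uj u hu j)
  have hGper : Function.Periodic (Gfun u) (2 * Real.pi) := by
    intro x
    rw [Gfun, Gfun]
    apply Finset.sum_congr rfl
    intro j _
    rw [Hc_periodic u j x, periodic_deriv' (fun t => congrFun (hper t) j) x]
  haveI : Fact (0 < 2 * Real.pi) := ⟨two_pi_pos'⟩
  obtain ⟨Gcm, hGL⟩ : ∃ Gcm : C(AddCircle (2 * Real.pi), ℂ), ⇑Gcm = hGper.lift :=
    ⟨⟨hGper.lift, continuous_periodic_lift hGper hGcont⟩, rfl⟩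
  have hcoe : ∀ t : ℝ, Gcm (t : AddCircle (2 * Real.pi)) = Gfun u t := fun t => by
    rw [hGL]
    exact hGper.lift_coe t
  have hFc : ∀ K : ℤ, fourierCoeff (⇑Gcm) K = 0 := by
    intro K
    rw [fourierCoeff_circ_eq K]
    have := hc K
    rw [coefC_eq] at this
    rw [← this]
    congr 1
    apply intervalIntegral.integral_congr
    intro x _
    show Gcm (x : AddCircle (2 * Real.pi)) * _ = Gfun u x * _
    rw [hcoe x]
  have hsummable : Summable (fourierCoeff (⇑Gcm)) := by
    have : (fourierCoeff (⇑Gcm)) = fun _ => (0:ℂ) := funext hFc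
    rw [this]
    exact summable_zero
  have hHS := has_pointwise_sum_fourier_series_of_summable hsummable
    (θ : AddCircle (2 * Real.pi))
  have h0 : (fun i : ℤ => fourierCoeff (⇑Gcm) i • fourier i (θ : AddCircle (2 * Real.pi)))
      = fun _ => (0:ℂ) := funext fun i => by rw [hFc]; simp
  rw [h0] at hHS
  rw [← hcoe θ]
  exact hHS.unique hasSum_zero

lemma sum_cast {k : ℕ} (u : ℝ → Fin k → ℝ) (K : ℕ) :
    ∑ m ∈ Finset.Ico 1 K,
        ((m : ℂ) * ((K - m : ℕ) : ℂ)) * dotC (fCoef u (m : ℤ)) (fCoef u ((K : ℤ) - (m : ℤ)))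
      = ∑ n ∈ Finset.Ico (1:ℤ) (K:ℤ), (n : ℂ) * (((K : ℤ) - n : ℤ) : ℂ)
          * dotC (fCoef u n) (fCoef u ((K : ℤ) - n)) := by
  apply Finset.sum_bij (i := fun (m : ℕ) _ => (m : ℤ))
  · intro a ha
    simp only [Finset.mem_Ico] at ha ⊢
    omega
  · intro a _ b _ hab
    exact_mod_cast hab
  · intro n hn
    simp only [Finset.mem_Ico] at hn
    exact ⟨n.toNat, by simp only [Finset.mem_Ico]; omega, by omega⟩
  · intro m hm
    simp only [Finset.mem_Ico] at hm
    have h1 : ((K - m : ℕ) : ℂ) = (((K : ℤ) - (m : ℤ) : ℤ) : ℂ) := by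
      push_cast [Nat.cast_sub hm.2.le]
      ring
    rw [h1]
    push_cast
    ring
/-- stationarity of the half Dirichlet energy is equivalent to the vanishing
of the Fourier-coefficient sums `Σ_{m+n=K, m,n ≥ 1} m n û(m)·û(n)`. -/
theorem stationary_iff_fourier_condition {k : ℕ}
    (u : ℝ → Fin k → ℝ) (hu : ContDiff ℝ (⊤ : ℕ∞) u) (hper : Function.Periodic u (2 * Real.pi)) :
    (∀ θ : ℝ, dotR (halfLap u θ) (deriv u θ) = 0) ↔
      ∀ K : ℕ, 1 ≤ K →
        ∑ m ∈ Finset.Ico 1 K,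
          ((m : ℂ) * ((K - m : ℕ) : ℂ)) * dotC (fCoef u (m : ℤ)) (fCoef u ((K : ℤ) - (m : ℤ))) = 0 := by
  have hGR : Gfun u = fun θ => ((dotR (halfLap u θ) (deriv u θ) : ℝ) : ℂ) :=
    funext fun θ => (G_eq_dot u hu θ).symm
  constructor
  · intro h K hK
    have hcoef : fourierCoeffOn two_pi_pos' (Gfun u) (K : ℤ) = 0 := by
      have hz : Gfun u = fun _ => (0:ℂ) := by
        rw [hGR]
        funext θ
        rw [h θ]
        simp
      rw [hz, coefC_eq]
      simp
    rw [coefG_eq_finsum u hu hper (K : ℤ) (Int.natCast_nonneg K)] at hcoef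
    have hzero := (mul_eq_zero.mp hcoef).resolve_left Complex.I_ne_zero
    rw [sum_cast u K]
    exact hzero
  · intro h θ
    have hpos : ∀ K : ℤ, 0 ≤ K → fourierCoeffOn two_pi_pos' (Gfun u) K = 0 := by
      intro K hK
      rw [coefG_eq_finsum u hu hper K hK]
      obtain ⟨Kn, rfl⟩ := Int.eq_ofNat_of_zero_le hK
      rcases Nat.eq_zero_or_pos Kn with rfl | hKn
      · simp
      · rw [← sum_cast u Kn, h Kn hKn, mul_zero]
    have hvanish : ∀ K : ℤ, fourierCoeffOn two_pi_pos' (Gfun u) K = 0 := by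
      intro K
      rcases le_or_gt 0 K with hK | hK
      · exact hpos K hK
      · have hKrw : fourierCoeffOn two_pi_pos' (Gfun u) K =
            (starRingEnd ℂ) (fourierCoeffOn two_pi_pos' (Gfun u) (-K)) := by
          conv_lhs => rw [show K = -(-K) by ring]
          rw [hGR]
          exact coefC_real_neg_conj _ (-K)
        rw [hKrw, hpos (-K) (by omega), map_zero]
    have hG0 := G_vanish u hu hper hvanish θ
    have hh := G_eq_dot u hu θ
    rw [hG0] at hh
    exact_mod_cast hh
end
end

section
/- Let u : ℝ → ℝ^k be a smooth 2π-periodic function and let f(z) = Σ_{n≥1} n û(n) z^{n−1} (an absolutely convergent power series for |z| ≤ 1, equal to ∂ũ/∂z for the harmonic extension ũ of u). Then for every θ ∈ ℝ: f(e^{iθ}) · f(e^{iθ}) = (e^{−2iθ}/4) · [ |(-Δ)^{1/2}u(θ)|² − |u'(θ)|² − 2i (-Δ)^{1/2}u(θ) · u'(θ) ]. -/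
open scoped Real ENNReal
open Complex MeasureTheory

noncomputable section

/-- The boundary values of `∂ũ/∂z`: `f(z) = Σ_{n ≥ 1} n û(n) z^{n-1}`. -/
def dzBoundary {k : ℕ} (u : ℝ → Fin k → ℝ) (z : ℂ) : Fin k → ℂ :=
  fun j => ∑' n : ℕ, ((n : ℂ) + 1) * fCoef u ((n : ℤ) + 1) j * z ^ n

def cc (g : ℝ → ℂ) (n : ℤ) : ℂ := fourierCoeffOn two_pi_pos' g n

lemma fourier_exp' {T : ℝ} (hT : T = 2 * Real.pi) (n : ℤ) (x : ℝ) :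
    (fourier n (x : AddCircle T) : ℂ) = Complex.exp (Complex.I * n * x) := by
  subst hT
  rw [fourier_coe_apply]
  congr 1
  have h : (2 * Real.pi : ℂ) ≠ 0 := by
    simp [Real.pi_ne_zero, Complex.ofReal_ne_zero]
  push_cast
  field_simp

lemma cc_eq (g : ℝ → ℂ) (n : ℤ) :
    cc g n = (1 / (2 * Real.pi) : ℂ) *
      ∫ θ in (0:ℝ)..(2 * Real.pi), g θ * Complex.exp (-(Complex.I * n * θ)) := by
  rw [cc, fourierCoeffOn_eq_integral]
  rw [real_smul]
  congr 1
  · push_cast; ring_nf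
  · refine intervalIntegral.integral_congr fun x _ => ?_
    rw [fourier_exp' (by ring), smul_eq_mul, mul_comm]
    congr 1
    push_cast
    ring_nf

lemma cc_conj (w : ℝ → ℝ) (n : ℤ) :
    cc (fun t => (w t : ℂ)) (-n) = starRingEnd ℂ (cc (fun t => (w t : ℂ)) n) := by
  rw [cc_eq, cc_eq, map_mul]
  have h1 : (starRingEnd ℂ) (1 / (2 * Real.pi) : ℂ) = (1 / (2 * Real.pi) : ℂ) := by
    rw [map_div₀, map_one, map_mul, Complex.conj_ofReal, map_ofNat]
  rw [h1]
  congr 1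
  have h2 : ∀ x : ℝ, ((w x : ℂ) * Complex.exp (-(Complex.I * ((-n : ℤ) : ℂ) * x)))
      = starRingEnd ℂ ((w x : ℂ) * Complex.exp (-(Complex.I * (n : ℂ) * x))) := by
    intro x
    rw [map_mul, Complex.conj_ofReal, ← Complex.exp_conj]
    congr 1
    simp only [map_neg, map_mul, Complex.conj_I, Complex.conj_ofReal, map_intCast]
    push_cast
    ring
  rw [intervalIntegral.integral_of_le two_pi_pos'.le,
    intervalIntegral.integral_of_le two_pi_pos'.le]
  simp only [h2]
  rw [integral_conj]

lemma cc_norm_le {g : ℝ → ℂ} (n : ℤ) :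
    ‖cc g n‖ ≤ (1 / (2 * Real.pi)) * ∫ θ in (0:ℝ)..(2 * Real.pi), ‖g θ‖ := by
  rw [cc_eq, norm_mul]
  have h1 : ‖(1 / (2 * Real.pi) : ℂ)‖ = 1 / (2 * Real.pi) := by
    rw [show (1 / (2 * Real.pi) : ℂ) = ((1 / (2 * Real.pi) : ℝ) : ℂ) by push_cast; ring]
    rw [Complex.norm_real, Real.norm_eq_abs, abs_of_pos (by positivity)]
  rw [h1]
  gcongr
  calc ‖∫ θ in (0:ℝ)..(2 * Real.pi), g θ * Complex.exp (-(Complex.I * n * θ))‖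
      ≤ ∫ θ in (0:ℝ)..(2 * Real.pi), ‖g θ * Complex.exp (-(Complex.I * n * θ))‖ :=
        intervalIntegral.norm_integral_le_integral_norm two_pi_pos'.le
    _ = ∫ θ in (0:ℝ)..(2 * Real.pi), ‖g θ‖ := by
        refine intervalIntegral.integral_congr fun x _ => ?_
        rw [norm_mul]
        have : ‖Complex.exp (-(Complex.I * n * x))‖ = 1 := by
          rw [Complex.norm_exp]
          simp
        rw [this, mul_one]

lemma periodic_deriv'' {g : ℝ → ℂ} (h : Function.Periodic g (2 * Real.pi)) :
    Function.Periodic (deriv g) (2 * Real.pi) := by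
  intro x
  have hg : (fun t => g (t + 2 * Real.pi)) = g := funext fun t => h t
  calc deriv g (x + 2 * Real.pi) = deriv (fun t => g (t + 2 * Real.pi)) x := by
        rw [deriv_comp_add_const]
    _ = deriv g x := by rw [hg]

lemma one_le_inf : (1 : WithTop ℕ∞) ≤ ((⊤ : ℕ∞) : WithTop ℕ∞) := by exact_mod_cast le_top

lemma cc_deriv {g : ℝ → ℂ} (hg : ContDiff ℝ ((⊤ : ℕ∞) : WithTop ℕ∞) g) (hper : Function.Periodic g (2 * Real.pi))
    (n : ℤ) : cc (deriv g) n = Complex.I * n * cc g n := by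
  have hdiff : ∀ x ∈ Set.uIcc (0:ℝ) (2 * Real.pi), HasDerivAt g (deriv g x) x :=
    fun x _ => (hg.differentiable (by simp) x).hasDerivAt
  have hcont : Continuous (deriv g) := hg.continuous_deriv one_le_inf
  have hint : IntervalIntegrable (deriv g) volume 0 (2 * Real.pi) :=
    hcont.intervalIntegrable _ _
  have hval : g (2 * Real.pi) - g 0 = 0 := by
    have := hper 0
    rw [zero_add] at this
    rw [this, sub_self]
  rcases eq_or_ne n 0 with rfl | hn
  · rw [cc_eq]
    simp only [Int.cast_zero, mul_zero, zero_mul, neg_zero, Complex.exp_zero, mul_one]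
    rw [intervalIntegral.integral_deriv_eq_sub (fun x _ => hg.differentiable (by simp) x) hint,
      hval, mul_zero]
  · have h := fourierCoeffOn_of_hasDerivAt two_pi_pos' hn hdiff hint
    rw [hval, mul_zero, zero_sub] at h
    have h2 : cc g n = 1 / (-2 * Real.pi * Complex.I * n) *
        (-((((2 * Real.pi : ℝ) : ℂ) - ((0:ℝ):ℂ)) * cc (deriv g) n)) := h
    have hπ : (Real.pi : ℂ) ≠ 0 := by
      simpa using Real.pi_ne_zero
    have hn' : (n : ℂ) ≠ 0 := Int.cast_ne_zero.mpr hn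
    have : cc (deriv g) n = Complex.I * n * cc g n := by
      rw [h2]
      push_cast
      field_simp
      ring
    exact this

lemma summable_abs_cc {g : ℝ → ℂ} (hg : ContDiff ℝ ((⊤ : ℕ∞) : WithTop ℕ∞) g)
    (hper : Function.Periodic g (2 * Real.pi)) :
    Summable (fun n : ℤ => |(n : ℝ)| * ‖cc g n‖) := by
  have hg1 : ContDiff ℝ ((⊤ : ℕ∞) : WithTop ℕ∞) (deriv g) := (contDiff_infty_iff_deriv.mp hg).2
  have hg2 : ContDiff ℝ ((⊤ : ℕ∞) : WithTop ℕ∞) (deriv (deriv g)) := (contDiff_infty_iff_deriv.mp hg1).2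
  have hp1 := periodic_deriv'' hper
  have hp2 := periodic_deriv'' hp1
  set M : ℝ := (1 / (2 * Real.pi)) *
    ∫ θ in (0:ℝ)..(2 * Real.pi), ‖deriv (deriv (deriv g)) θ‖ with hM
  have hc3 : ∀ n : ℤ, cc (deriv (deriv (deriv g))) n = (Complex.I * n) ^ 3 * cc g n := by
    intro n
    rw [cc_deriv hg2 hp2, cc_deriv hg1 hp1, cc_deriv hg hper]
    ring
  have hbound : ∀ n : ℤ, ((|n| : ℝ)) ^ 3 * ‖cc g n‖ ≤ M := by
    intro n
    have := cc_norm_le (g := deriv (deriv (deriv g))) n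
    rw [hc3 n, norm_mul, norm_pow, norm_mul, Complex.norm_I, one_mul] at this
    rw [hM]
    simpa [Complex.norm_intCast] using this
  have hsq : Summable (fun n : ℤ => M * (1 / (n : ℝ) ^ 2)) :=
    ((Real.summable_one_div_int_pow (p := 2)).mpr one_lt_two).mul_left M
  refine hsq.of_nonneg_of_le (fun n => by positivity) (fun n => ?_)
  rcases eq_or_ne n 0 with rfl | hn
  · simp
  · have hn1 : (1:ℝ) ≤ |(n:ℝ)| := by
      rw [← Int.cast_abs]
      exact_mod_cast Int.one_le_abs hn
    have hpos : (0:ℝ) < |(n:ℝ)| := by linarith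
    have h3 := hbound n
    rw [mul_one_div, le_div_iff₀ (by positivity : (0:ℝ) < (n:ℝ)^2)]
    calc |(n:ℝ)| * ‖cc g n‖ * (n:ℝ)^2 = |(n:ℝ)| ^ 3 * ‖cc g n‖ := by
          rw [← _root_.sq_abs (n:ℝ)]
          ring
      _ ≤ M := h3

lemma cc_hasSum {g : ℝ → ℂ} (hg : Continuous g) (hper : Function.Periodic g (2 * Real.pi))
    (hsum : Summable (fun n : ℤ => cc g n)) (θ : ℝ) :
    HasSum (fun n : ℤ => cc g n * Complex.exp (Complex.I * n * θ)) (g θ) := by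
  haveI : Fact (0 < 2 * Real.pi) := ⟨two_pi_pos'⟩
  let F : C(AddCircle (2 * Real.pi), ℂ) := ⟨hper.lift, hg.quotient_liftOn' _⟩
  have hF : ∀ n : ℤ, fourierCoeff (⇑F) n = cc g n := by
    intro n
    rw [fourierCoeff_eq_intervalIntegral (⇑F) n 0, cc_eq]
    rw [real_smul]
    congr 1
    · push_cast; ring_nf
    · rw [zero_add]
      refine intervalIntegral.integral_congr fun x _ => ?_
      rw [fourier_exp' rfl, smul_eq_mul, mul_comm]
      have : F ((x : ℝ) : AddCircle (2 * Real.pi)) = g x := hper.lift_coe x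
      rw [this]
      congr 1
      push_cast
      ring_nf
  have hsumF : Summable (fourierCoeff (⇑F)) := by
    refine hsum.congr fun n => (hF n).symm
  have h := has_pointwise_sum_fourier_series_of_summable hsumF ((θ : ℝ) : AddCircle (2 * Real.pi))
  have hFθ : F ((θ : ℝ) : AddCircle (2 * Real.pi)) = g θ := hper.lift_coe θ
  rw [hFθ] at h
  refine h.congr_fun fun n => ?_
  rw [hF n, smul_eq_mul, fourier_exp' rfl]

lemma norm_exp_I_int (m : ℤ) (θ : ℝ) : ‖Complex.exp (Complex.I * m * θ)‖ = 1 := by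
  rw [Complex.norm_exp]
  simp

lemma conj_exp_I_int (m : ℤ) (θ : ℝ) :
    starRingEnd ℂ (Complex.exp (Complex.I * m * θ)) =
      Complex.exp (Complex.I * ((-m : ℤ) : ℂ) * θ) := by
  rw [← Complex.exp_conj]
  congr 1
  simp only [map_mul, Complex.conj_I, Complex.conj_ofReal, map_intCast]
  push_cast
  ring

lemma key (w : ℝ → ℝ) (hw : ContDiff ℝ ((⊤ : ℕ∞) : WithTop ℕ∞) w) (hp : Function.Periodic w (2 * Real.pi)) (θ : ℝ) :
    ∃ G : ℂ,
      (∑' n : ℕ, ((n : ℂ) + 1) * cc (fun t => (w t : ℂ)) ((n : ℤ) + 1) *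
          (Complex.exp (Complex.I * θ)) ^ n) = Complex.exp (-(Complex.I * θ)) * G
      ∧ (((∑' n : ℤ, ((|n| : ℤ) : ℂ) * cc (fun t => (w t : ℂ)) n *
            Complex.exp (Complex.I * n * θ)).re : ℝ) : ℂ) = G + starRingEnd ℂ G
      ∧ ((deriv w θ : ℝ) : ℂ) = Complex.I * G - Complex.I * starRingEnd ℂ G := by
  set g : ℝ → ℂ := fun t => (w t : ℂ) with hgdef
  have hg : ContDiff ℝ ((⊤ : ℕ∞) : WithTop ℕ∞) g := Complex.ofRealCLM.contDiff.comp hw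
  have hgper : Function.Periodic g (2 * Real.pi) := fun x => by
    simp only [hgdef, hp x]
  have hderiv : deriv g = fun t => ((deriv w t : ℝ) : ℂ) := by
    funext t
    exact ((hw.differentiable (by simp) t).hasDerivAt.ofReal_comp).deriv
  have s1 : Summable (fun n : ℤ => |(n : ℝ)| * ‖cc g n‖) := summable_abs_cc hg hgper
  have hconj : ∀ n : ℤ, cc g (-n) = starRingEnd ℂ (cc g n) := cc_conj w
  set P : ℕ → ℂ := fun n => ((((n:ℤ) + 1 : ℤ)) : ℂ) * cc g ((n:ℤ) + 1) *
    Complex.exp (Complex.I * ((((n:ℤ) + 1 : ℤ)) : ℂ) * θ) with hPdef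
  have s2 : Summable (fun n : ℕ => |(((n:ℤ) + 1 : ℤ) : ℝ)| * ‖cc g ((n:ℤ) + 1)‖) :=
    s1.comp_injective (fun a b h => by omega)
  have sPos : Summable P := by
    refine Summable.of_norm (s2.congr fun n => ?_)
    rw [hPdef]
    simp only []
    rw [norm_mul, norm_mul, norm_exp_I_int, mul_one, Complex.norm_intCast]
  set G : ℂ := ∑' n, P n with hGdef
  have hGsum : HasSum P G := sPos.hasSum
  have hGconj : HasSum (fun n : ℕ => starRingEnd ℂ (P n)) (starRingEnd ℂ G) :=
    hGsum.map (starRingEnd ℂ) continuous_conj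
  have hPconj : ∀ n : ℕ, starRingEnd ℂ (P n) =
      ((-( (n:ℤ) + 1) : ℤ) : ℂ) * cc g (-((n:ℤ) + 1)) *
        Complex.exp (Complex.I * ((-((n:ℤ) + 1) : ℤ) : ℂ) * θ) * (-1 : ℂ) := by
    intro n
    rw [hPdef]
    simp only []
    rw [map_mul, map_mul, conj_exp_I_int, hconj ((n:ℤ)+1), map_intCast]
    push_cast
    ring
  refine ⟨G, ?_, ?_, ?_⟩
  · -- statement (1)
    rw [← (hGsum.mul_left (Complex.exp (-(Complex.I * θ)))).tsum_eq]
    refine tsum_congr fun n => ?_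
    rw [hPdef]
    simp only []
    rw [show Complex.exp (Complex.I * θ) ^ n = Complex.exp (Complex.I * (n : ℂ) * θ) by
      rw [← Complex.exp_nat_mul]; ring_nf]
    have he : Complex.exp (-(Complex.I * θ)) *
        Complex.exp (Complex.I * ((((n:ℤ) + 1 : ℤ)) : ℂ) * θ) =
          Complex.exp (Complex.I * (n : ℂ) * θ) := by
      rw [← Complex.exp_add]
      congr 1
      push_cast
      ring
    rw [← he]
    push_cast
    ring
  · -- statement (2)
    have hApos : HasSum (fun n : ℕ => ((|(n:ℤ) + 1| : ℤ) : ℂ) * cc g ((n:ℤ) + 1) *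
        Complex.exp (Complex.I * (((n:ℤ) + 1 : ℤ) : ℂ) * θ)) G := by
      refine hGsum.congr_fun fun n => ?_
      rw [hPdef]
      simp only []
      rw [abs_of_nonneg (by positivity : (0:ℤ) ≤ (n:ℤ) + 1)]
    have hAneg : HasSum (fun n : ℕ => ((|(-((n:ℤ) + 1))| : ℤ) : ℂ) * cc g (-((n:ℤ) + 1)) *
        Complex.exp (Complex.I * ((-((n:ℤ) + 1) : ℤ) : ℂ) * θ)) (starRingEnd ℂ G) := by
      refine hGconj.congr_fun fun n => ?_
      rw [hPconj n]
      rw [abs_of_nonpos (by omega : -((n:ℤ) + 1) ≤ 0)]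
      push_cast
      ring
    have hA : HasSum (fun m : ℤ => ((|m| : ℤ) : ℂ) * cc g m *
        Complex.exp (Complex.I * (m : ℂ) * θ)) (G + starRingEnd ℂ G) := by
      have h := HasSum.of_add_one_of_neg_add_one
        (f := fun m : ℤ => ((|m| : ℤ) : ℂ) * cc g m * Complex.exp (Complex.I * (m : ℂ) * θ))
        hApos hAneg
      simpa using h
    rw [hA.tsum_eq, Complex.add_conj]
    simp
  · -- statement (3)
    have hcd : ∀ n : ℤ, cc (deriv g) n = Complex.I * n * cc g n := cc_deriv hg hgper
    have hdc : Continuous (deriv g) := hg.continuous_deriv one_le_inf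
    have hdper : Function.Periodic (deriv g) (2 * Real.pi) := periodic_deriv'' hgper
    have hdsum : Summable (fun n : ℤ => cc (deriv g) n) := by
      refine Summable.of_norm (s1.congr fun n => ?_)
      rw [hcd n, norm_mul, norm_mul, Complex.norm_I, one_mul, Complex.norm_intCast]
    have hD := cc_hasSum hdc hdper hdsum θ
    have hgw : deriv g θ = ((deriv w θ : ℝ) : ℂ) := by rw [hderiv]
    have hBpos : HasSum (fun n : ℕ => cc (deriv g) ((n:ℤ) + 1) *
        Complex.exp (Complex.I * (((n:ℤ) + 1 : ℤ) : ℂ) * θ)) (Complex.I * G) := by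
      refine (hGsum.mul_left Complex.I).congr_fun fun n => ?_
      rw [hPdef]
      simp only []
      rw [hcd]
      ring
    have hBneg : HasSum (fun n : ℕ => cc (deriv g) (-((n:ℤ) + 1)) *
        Complex.exp (Complex.I * ((-((n:ℤ) + 1) : ℤ) : ℂ) * θ))
        (starRingEnd ℂ (Complex.I * G)) := by
      have hc := (hGsum.mul_left Complex.I).map (starRingEnd ℂ) continuous_conj
      refine hc.congr_fun fun n => ?_
      simp only [Function.comp_apply]
      rw [map_mul, hPconj n, hcd, Complex.conj_I]
      push_cast
      ring
    have hB : HasSum (fun m : ℤ => cc (deriv g) m *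
        Complex.exp (Complex.I * (m : ℂ) * θ))
        (Complex.I * G + starRingEnd ℂ (Complex.I * G)) := by
      have h := HasSum.of_add_one_of_neg_add_one
        (f := fun m : ℤ => cc (deriv g) m * Complex.exp (Complex.I * (m : ℂ) * θ))
        hBpos hBneg
      simpa [hcd] using h
    have huniq := hD.unique hB
    rw [← hgw, huniq, map_mul, Complex.conj_I]
    ring

/-- the trace of the Hopf differential of the harmonic extension:
`f(e^{iθ})·f(e^{iθ}) = (e^{-2iθ}/4)(|(-Δ)^{1/2}u|² − |u'|² − 2i (-Δ)^{1/2}u·u')`. -/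
theorem trace_of_hopf_differential {k : ℕ}
    (u : ℝ → Fin k → ℝ) (hu : ContDiff ℝ (⊤ : ℕ∞) u) (hper : Function.Periodic u (2 * Real.pi)) :
    ∀ θ : ℝ,
      dotC (dzBoundary u (Complex.exp (Complex.I * (θ : ℂ))))
           (dzBoundary u (Complex.exp (Complex.I * (θ : ℂ))))
        = (Complex.exp (-(2 * Complex.I * (θ : ℂ))) / 4) *
            (((dotR (halfLap u θ) (halfLap u θ) : ℝ) : ℂ)
              - ((dotR (deriv u θ) (deriv u θ) : ℝ) : ℂ)
              - 2 * Complex.I * ((dotR (halfLap u θ) (deriv u θ) : ℝ) : ℂ)) := by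

  intro θ
  have husmooth : ContDiff ℝ ((⊤ : ℕ∞) : WithTop ℕ∞) u := hu.of_le (by simp)
  have hwj : ∀ j, ContDiff ℝ ((⊤ : ℕ∞) : WithTop ℕ∞) (fun t => u t j) := fun j =>
    (ContinuousLinearMap.proj (R := ℝ) (φ := fun _ : Fin k => ℝ) j).contDiff.comp husmooth
  have hpj : ∀ j, Function.Periodic (fun t => u t j) (2 * Real.pi) := fun j x => by
    show u (x + 2 * Real.pi) j = u x j
    rw [hper x]
  have hfc : ∀ (n : ℤ) (j : Fin k), fCoef u n j = cc (fun t => (u t j : ℂ)) n := fun n j =>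
    (cc_eq _ n).symm
  have hderiv_coord : ∀ j, deriv (fun t => u t j) θ = deriv u θ j := by
    intro j
    have hd : HasDerivAt u (deriv u θ) θ :=
      ((husmooth.differentiable (by simp)) θ).hasDerivAt
    exact (hasDerivAt_pi.mp hd j).deriv
  choose G h1 h2 h3 using fun j => key (fun t => u t j) (hwj j) (hpj j) θ
  -- coordinatewise identities
  have hdz : ∀ j, dzBoundary u (Complex.exp (Complex.I * θ)) j =
      Complex.exp (-(Complex.I * θ)) * G j := by
    intro j
    rw [← h1 j]
    exact tsum_congr fun n => by rw [hfc]
  have hH : ∀ j, ((halfLap u θ j : ℝ) : ℂ) = G j + starRingEnd ℂ (G j) := by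
    intro j
    have hhl : halfLap u θ j = (∑' n : ℤ, ((|n| : ℤ) : ℂ) * cc (fun t => (u t j : ℂ)) n *
        Complex.exp (Complex.I * n * θ)).re := by
      simp only [halfLap]
      congr 1
      exact tsum_congr fun n => by rw [hfc]
    rw [hhl, h2 j]
  have hD : ∀ j, ((deriv u θ j : ℝ) : ℂ) = Complex.I * G j - Complex.I * starRingEnd ℂ (G j) := by
    intro j
    rw [← hderiv_coord j]
    exact h3 j
  have h2G : ∀ j, 2 * G j = ((halfLap u θ j : ℝ) : ℂ) - Complex.I * ((deriv u θ j : ℝ) : ℂ) := by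
    intro j
    rw [hH j, hD j]
    linear_combination (G j - starRingEnd ℂ (G j)) * Complex.I_sq
  have hexp2 : Complex.exp (-(Complex.I * θ)) * Complex.exp (-(Complex.I * θ)) =
      Complex.exp (-(2 * Complex.I * θ)) := by
    rw [← Complex.exp_add]
    congr 1
    ring
  simp only [dotC, dotR]
  push_cast
  calc (∑ j, dzBoundary u (Complex.exp (Complex.I * θ)) j *
        dzBoundary u (Complex.exp (Complex.I * θ)) j)
      = ∑ j, Complex.exp (-(2 * Complex.I * θ)) / 4 *
          (((halfLap u θ j : ℝ) : ℂ) * ((halfLap u θ j : ℝ) : ℂ)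
            - ((deriv u θ j : ℝ) : ℂ) * ((deriv u θ j : ℝ) : ℂ)
            - 2 * Complex.I * (((halfLap u θ j : ℝ) : ℂ) * ((deriv u θ j : ℝ) : ℂ))) := by
        refine Finset.sum_congr rfl fun j _ => ?_
        rw [hdz j]
        have h4 : (Complex.exp (-(Complex.I * θ)) * G j) *
            (Complex.exp (-(Complex.I * θ)) * G j) =
            Complex.exp (-(2 * Complex.I * θ)) / 4 * ((2 * G j) * (2 * G j)) := by
          rw [← hexp2]
          ring
        rw [h4, h2G j]
        linear_combination (Complex.exp (-(2 * Complex.I * θ)) / 4 *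
          (((deriv u θ j : ℝ) : ℂ) * ((deriv u θ j : ℝ) : ℂ))) * Complex.I_sq
    _ = Complex.exp (-(2 * Complex.I * θ)) / 4 *
          ((∑ j, ((halfLap u θ j : ℝ) : ℂ) * ((halfLap u θ j : ℝ) : ℂ))
            - (∑ j, ((deriv u θ j : ℝ) : ℂ) * ((deriv u θ j : ℝ) : ℂ))
            - 2 * Complex.I *
                ∑ j, ((halfLap u θ j : ℝ) : ℂ) * ((deriv u θ j : ℝ) : ℂ)) := by
        simp only [mul_sub, Finset.sum_sub_distrib, Finset.mul_sum]
end
end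

section
/- Let a, μ ∈ ℂ with |a| < 1 and |μ| = 1, and let m(z) = μ(z−a)/(āz−1), which maps the unit circle onto itself. Then for every measurable u : S¹ → ℝ^k one has E(u∘m) = E(u) (as an equality in [0, ∞]), i.e. the half Dirichlet energy on the circle is invariant under traces of conformal transformations of the disc. -/
open scoped Real ENNReal
open Complex MeasureTheory

noncomputable section

/-- The half Dirichlet energy of a function on the unit circle `S¹ ⊂ ℂ`. -/
def circEnergy {k : ℕ} (u : ℂ → Fin k → ℝ) : ℝ≥0∞ :=
  ENNReal.ofReal (1 / (2 * Real.pi)) *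
    ∫⁻ p : ℝ × ℝ in (Set.Ioc 0 (2 * Real.pi)) ×ˢ (Set.Ioc 0 (2 * Real.pi)),
      ENNReal.ofReal ((∑ j, (u (Complex.exp (Complex.I * (p.1 : ℂ))) j
          - u (Complex.exp (Complex.I * (p.2 : ℂ))) j) ^ 2) /
        ‖Complex.exp (Complex.I * (p.1 : ℂ))
          - Complex.exp (Complex.I * (p.2 : ℂ))‖ ^ 2)

namespace ConfInvAux

/-- `1 - conj a * e^{iθ}`. -/
def hh (a : ℂ) (θ : ℝ) : ℂ := 1 - (starRingEnd ℂ a) * Complex.exp (Complex.I * θ)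

/-- Angle function (continuous lift) of the boundary Möbius map. -/
def psi (a μ : ℂ) (θ : ℝ) : ℝ := (-μ).arg + θ - 2 * (hh a θ).arg

/-- Derivative of `psi`. -/
def DD (a : ℂ) (θ : ℝ) : ℝ := (1 - Complex.normSq a) / Complex.normSq (hh a θ)

lemma abs_expI (θ : ℝ) : ‖Complex.exp (Complex.I * θ)‖ = 1 := by
  simp [Complex.norm_exp]

lemma normSq_expI (θ : ℝ) : Complex.normSq (Complex.exp (Complex.I * θ)) = 1 := by
  rw [Complex.normSq_eq_norm_sq, abs_expI]; norm_num

lemma re_hh_pos {a : ℂ} (ha : ‖a‖ < 1) (θ : ℝ) : 0 < (hh a θ).re := by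
  have h1 : (starRingEnd ℂ a * Complex.exp (Complex.I * θ)).re
      ≤ ‖starRingEnd ℂ a * Complex.exp (Complex.I * θ)‖ := Complex.re_le_norm _
  have h2 : ‖starRingEnd ℂ a * Complex.exp (Complex.I * θ)‖ = ‖a‖ := by
    rw [norm_mul, abs_expI, Complex.norm_conj, mul_one]
  have : (hh a θ).re = 1 - (starRingEnd ℂ a * Complex.exp (Complex.I * θ)).re := by
    simp [hh]
  rw [this]; linarith

lemma hh_ne {a : ℂ} (ha : ‖a‖ < 1) (θ : ℝ) : hh a θ ≠ 0 := by
  intro h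
  have := re_hh_pos ha θ
  rw [h] at this; simp at this

lemma hh_slit {a : ℂ} (ha : ‖a‖ < 1) (θ : ℝ) : hh a θ ∈ Complex.slitPlane :=
  Or.inl (re_hh_pos ha θ)

lemma DD_pos {a : ℂ} (ha : ‖a‖ < 1) (θ : ℝ) : 0 < DD a θ := by
  have h1 : Complex.normSq a < 1 := by
    rw [Complex.normSq_eq_norm_sq]
    nlinarith [norm_nonneg a]
  exact div_pos (by linarith) (Complex.normSq_pos.2 (hh_ne ha θ))

lemma continuous_hh (a : ℂ) : Continuous (hh a) := by
  unfold hh; fun_prop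

lemma hexp_per (t : ℝ) :
    Complex.exp (Complex.I * ((t + 2 * Real.pi : ℝ) : ℂ)) = Complex.exp (Complex.I * t) := by
  push_cast
  rw [mul_add, Complex.exp_add]
  have : Complex.I * (2 * (Real.pi : ℂ)) = 2 * (Real.pi : ℂ) * Complex.I := by ring
  rw [this, Complex.exp_two_pi_mul_I, mul_one]

lemma psi_per (a μ : ℂ) (θ : ℝ) : psi a μ (θ + 2 * Real.pi) = psi a μ θ + 2 * Real.pi := by
  unfold psi hh
  rw [hexp_per]
  ring

lemma exp_psi {a μ : ℂ} (ha : ‖a‖ < 1) (hμ : ‖μ‖ = 1)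
    (hne : ∀ θ : ℝ, hh a θ ≠ 0) (θ : ℝ) :
    Complex.exp (Complex.I * (psi a μ θ : ℝ)) =
      μ * (Complex.exp (Complex.I * θ) - a) / (starRingEnd ℂ a * Complex.exp (Complex.I * θ) - 1) := by
  set z : ℂ := Complex.exp (Complex.I * θ) with hz
  set w : ℂ := hh a θ with hw
  have hwne : w ≠ 0 := hne θ
  have habsw : (‖w‖ : ℂ) ≠ 0 := by
    simpa using (norm_ne_zero_iff.mpr hwne)
  have hμne : μ ≠ 0 := by
    intro h; rw [h] at hμ; simp at hμ
  have hexpc : Complex.exp (((-μ).arg : ℂ) * Complex.I) = -μ := by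
    have := Complex.norm_mul_exp_arg_mul_I (-μ)
    rw [norm_neg, hμ] at this
    simpa using this
  have hexpg : Complex.exp ((w.arg : ℂ) * Complex.I) = w / ‖w‖ := by
    have := Complex.norm_mul_exp_arg_mul_I w
    field_simp
    rw [mul_comm] at this
    exact this
  have hzinv : z * Complex.exp (-(Complex.I * θ)) = 1 := by
    rw [hz, ← Complex.exp_add]; simp
  have hconjw : starRingEnd ℂ w = 1 - a * Complex.exp (-(Complex.I * θ)) := by
    rw [hw, hh]
    simp only [map_sub, map_one, map_mul, Complex.conj_conj]
    rw [← Complex.exp_conj]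
    congr 2
    simp [Complex.conj_ofReal]
  have hkey : z * starRingEnd ℂ w = z - a := by
    rw [hconjw, mul_sub, mul_one, ← mul_assoc, mul_comm z a, mul_assoc, hzinv, mul_one]
  have hden : starRingEnd ℂ a * z - 1 = -w := by
    rw [hw, hh]; ring
  have hsplit : Complex.exp (Complex.I * (psi a μ θ : ℝ)) =
      Complex.exp (((-μ).arg : ℂ) * Complex.I) * z /
        (Complex.exp ((w.arg : ℂ) * Complex.I) * Complex.exp ((w.arg : ℂ) * Complex.I)) := by
    rw [hz, ← Complex.exp_add, ← Complex.exp_add, ← Complex.exp_sub]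
    congr 1
    unfold psi
    push_cast
    rw [← hw]
    ring
  rw [hsplit, hexpc, hexpg, hden]
  have hmc : w * starRingEnd ℂ w = (‖w‖ : ℂ) ^ 2 := by
    rw [Complex.mul_conj, Complex.normSq_eq_norm_sq]; push_cast; ring
  rw [← hkey]
  have hd1 : Complex.exp ((w.arg : ℂ) * Complex.I) * Complex.exp ((w.arg : ℂ) * Complex.I) ≠ 0 :=
    mul_ne_zero (Complex.exp_ne_zero _) (Complex.exp_ne_zero _)
  rw [hexpg] at hd1
  rw [div_eq_div_iff hd1 (neg_ne_zero.2 hwne)]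
  field_simp
  linear_combination (-z) * hmc

lemma hasDerivAt_hh (a : ℂ) (θ : ℝ) :
    HasDerivAt (hh a) (-(starRingEnd ℂ a * (Complex.I * Complex.exp (Complex.I * θ)))) θ := by
  have h1 : HasDerivAt (fun t : ℝ => (t : ℂ)) 1 θ := by
    simpa using (hasDerivAt_id θ).ofReal_comp
  have h2 : HasDerivAt (fun t : ℝ => Complex.I * (t : ℂ)) Complex.I θ := by
    simpa using h1.const_mul Complex.I
  have h3 : HasDerivAt (fun t : ℝ => Complex.exp (Complex.I * (t : ℂ)))
      (Complex.exp (Complex.I * (θ : ℂ)) * Complex.I) θ := h2.cexp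
  have h4 := (h3.const_mul (starRingEnd ℂ a)).const_sub 1
  exact h4.congr_deriv (by ring)

lemma hasDerivAt_arg_hh {a : ℂ} (hslit : ∀ θ : ℝ, hh a θ ∈ Complex.slitPlane)
    (θ : ℝ) :
    HasDerivAt (fun t => (hh a t).arg)
      ((-(starRingEnd ℂ a * (Complex.I * Complex.exp (Complex.I * θ))) / hh a θ).im) θ := by
  have hlog : HasDerivAt (fun t : ℝ => Complex.log (hh a t))
      (-(starRingEnd ℂ a * (Complex.I * Complex.exp (Complex.I * θ))) / hh a θ) θ :=
    (hasDerivAt_hh a θ).clog_real (hslit θ)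
  have him := (Complex.imCLM.hasFDerivAt.comp θ hlog.hasFDerivAt).hasDerivAt
  simp only [Function.comp_def] at him
  exact (him.congr_deriv (by simp)).congr_of_eventuallyEq
    (Filter.Eventually.of_forall fun x => by simp [Complex.log_im])

lemma hasDerivAt_psi {a : ℂ} (μ : ℂ)
    (hslit : ∀ θ : ℝ, hh a θ ∈ Complex.slitPlane) (hne : ∀ θ : ℝ, hh a θ ≠ 0) (θ : ℝ) :
    HasDerivAt (psi a μ) (DD a θ) θ := by
  have harg := hasDerivAt_arg_hh hslit θ
  have hfun : psi a μ = fun x => (-μ).arg + x - (hh a x).arg * 2 := by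
    funext x; rw [psi]; ring
  have h1 : HasDerivAt (psi a μ)
      (1 - 2 * (-(starRingEnd ℂ a * (Complex.I * Complex.exp (Complex.I * θ))) / hh a θ).im) θ := by
    rw [hfun]
    have := ((hasDerivAt_id θ).const_add ((-μ).arg)).sub (harg.const_mul 2)
    have e : (fun x => (-μ).arg + x - (hh a x).arg * 2) =
        ((fun x => (-μ).arg + id x) - fun y => 2 * (hh a y).arg) := by
      funext x; simp only [id, Pi.sub_apply]; ring
    rw [e]; exact this
  convert h1 using 1
  set w := hh a θ with hw
  set t : ℂ := starRingEnd ℂ a * Complex.exp (Complex.I * θ) with ht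
  have hwt : w = 1 - t := rfl
  have hnum : (-(starRingEnd ℂ a * (Complex.I * Complex.exp (Complex.I * θ)))) = -(Complex.I * t) := by
    rw [ht]; ring
  rw [hnum]
  have hns : Complex.normSq t = Complex.normSq a := by
    rw [ht, map_mul, normSq_expI, Complex.normSq_conj, mul_one]
  have hnsw : Complex.normSq w ≠ 0 := (Complex.normSq_pos.2 (hne θ)).ne'
  have him : (-(Complex.I * t) / w).im = (Complex.normSq w - w.re) / Complex.normSq w := by
    have hstep : -(Complex.I * t) = Complex.I * w - Complex.I := by
      rw [hwt]; ring
    rw [hstep, Complex.div_im]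
    simp only [Complex.sub_im, Complex.sub_re, Complex.mul_im, Complex.mul_re,
      Complex.I_re, Complex.I_im, Complex.one_re, Complex.one_im]
    rw [Complex.normSq_apply]
    field_simp
    ring
  rw [him]
  have hre : w.re = 1 - t.re := by rw [hwt]; simp
  have hnsw' : Complex.normSq w = (1 - t.re)^2 + t.im^2 := by
    rw [hwt, Complex.normSq_apply]
    simp [Complex.sub_re, Complex.sub_im]
    ring
  have hnst : Complex.normSq a = t.re^2 + t.im^2 := by
    rw [← hns, Complex.normSq_apply]; ring
  rw [DD, ← hw, hre, hnsw', hnst]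
  have hpos : (1 - t.re)^2 + t.im^2 ≠ 0 := by rw [← hnsw']; exact hnsw
  field_simp
  ring

lemma jacobian_identity {a μ : ℂ} (hμ : ‖μ‖ = 1)
    (hne : ∀ θ : ℝ, hh a θ ≠ 0)
    (hexp : ∀ θ : ℝ, Complex.exp (Complex.I * (psi a μ θ : ℝ)) =
      μ * (Complex.exp (Complex.I * θ) - a) / (starRingEnd ℂ a * Complex.exp (Complex.I * θ) - 1))
    (x y : ℝ) :
    ‖Complex.exp (Complex.I * (psi a μ x : ℝ)) - Complex.exp (Complex.I * (psi a μ y : ℝ))‖ ^ 2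
      = DD a x * DD a y *
        ‖Complex.exp (Complex.I * (x : ℝ)) - Complex.exp (Complex.I * (y : ℝ))‖ ^ 2 := by
  set z : ℂ := Complex.exp (Complex.I * (x : ℝ))
  set w : ℂ := Complex.exp (Complex.I * (y : ℝ))
  set b : ℂ := starRingEnd ℂ a
  have hz : b * z - 1 = -(hh a x) := by rw [hh]; ring
  have hw : b * w - 1 = -(hh a y) := by rw [hh]; ring
  have hzne : b * z - 1 ≠ 0 := by rw [hz]; exact neg_ne_zero.2 (hne x)
  have hwne : b * w - 1 ≠ 0 := by rw [hw]; exact neg_ne_zero.2 (hne y)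
  have hab : a * b = (Complex.normSq a : ℂ) := by
    rw [← Complex.mul_conj]
  have hdiff : Complex.exp (Complex.I * (psi a μ x : ℝ)) - Complex.exp (Complex.I * (psi a μ y : ℝ))
      = μ * ((1 - (Complex.normSq a : ℂ)) * (w - z)) / ((b * z - 1) * (b * w - 1)) := by
    rw [hexp x, hexp y, div_sub_div _ _ hzne hwne]
    congr 1
    linear_combination (μ * (z - w)) * hab
  rw [hdiff]
  rw [Complex.sq_norm, map_div₀ Complex.normSq, map_mul Complex.normSq, map_mul Complex.normSq,
    map_mul Complex.normSq]
  have h1 : Complex.normSq μ = 1 := by rw [Complex.normSq_eq_norm_sq, hμ]; norm_num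
  have h2 : Complex.normSq ((1 : ℂ) - (Complex.normSq a : ℂ)) = (1 - Complex.normSq a)^2 := by
    rw [show (1:ℂ) - (Complex.normSq a : ℂ) = ((1 - Complex.normSq a : ℝ) : ℂ) by push_cast; ring,
      Complex.normSq_ofReal]
    ring
  have h3 : Complex.normSq (w - z) = Complex.normSq (z - w) := by
    rw [show w - z = -(z-w) by ring, Complex.normSq_neg]
  have h4 : Complex.normSq (b*z-1) = Complex.normSq (hh a x) := by rw [hz, Complex.normSq_neg]
  have h5 : Complex.normSq (b*w-1) = Complex.normSq (hh a y) := by rw [hw, Complex.normSq_neg]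
  rw [h1, h2, h3, h4, h5, DD, DD, Complex.sq_norm]
  have hx0 : Complex.normSq (hh a x) ≠ 0 := (Complex.normSq_pos.2 (hne x)).ne'
  have hy0 : Complex.normSq (hh a y) ≠ 0 := (Complex.normSq_pos.2 (hne y)).ne'
  field_simp

lemma lintegral_image_1d {s : Set ℝ} {f f' : ℝ → ℝ} (hs : MeasurableSet s)
    (hf' : ∀ x ∈ s, HasDerivWithinAt f (f' x) s x) (hf : Set.InjOn f s) (g : ℝ → ℝ≥0∞) :
    ∫⁻ x in f '' s, g x = ∫⁻ x in s, ENNReal.ofReal |f' x| * g (f x) := by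
  simpa only [ContinuousLinearMap.det_toSpanSingleton] using
    MeasureTheory.lintegral_image_eq_lintegral_abs_det_fderiv_mul volume hs
      (fun x hx => (hf' x hx).hasFDerivWithinAt) hf g

/-- Change of variables on the circle for a monotone lift with periodic integrand. -/
lemma cov_periodic {f f' : ℝ → ℝ} (hf : ∀ x, HasDerivAt f (f' x) x) (hpos : ∀ x, 0 < f' x)
    (hper : ∀ x, f (x + 2 * Real.pi) = f x + 2 * Real.pi) (H : ℝ → ℝ≥0∞)
    (hH : ∀ t, H (t + 2 * Real.pi) = H t) :
    ∫⁻ y in Set.Ioc 0 (2 * Real.pi), ENNReal.ofReal (f' y) * H (f y)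
      = ∫⁻ y in Set.Ioc 0 (2 * Real.pi), H y := by
  haveI : Fact (0 < 2 * Real.pi) := ⟨Real.two_pi_pos⟩
  have hmono : StrictMono f := strictMono_of_hasDerivAt_pos hf hpos
  have hdiff : Differentiable ℝ f := fun x => (hf x).differentiableAt
  have hcont : Continuous f := hdiff.continuous
  have hf2pi : f (2 * Real.pi) = f 0 + 2 * Real.pi := by
    have := hper 0; rwa [zero_add] at this
  have himg : f '' (Set.Ioc 0 (2 * Real.pi)) = Set.Ioc (f 0) (f 0 + 2 * Real.pi) := by
    apply Set.Subset.antisymm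
    · rintro _ ⟨x, hx, rfl⟩
      refine ⟨hmono hx.1, ?_⟩
      rw [← hf2pi]
      exact hmono.monotone hx.2
    · have h := intermediate_value_Ioc (le_of_lt Real.two_pi_pos) hcont.continuousOn
      rwa [hf2pi] at h
  have e1 : ∫⁻ y in Set.Ioc (f 0) (f 0 + 2 * Real.pi), H y
      = ∫⁻ y in Set.Ioc 0 (2 * Real.pi), ENNReal.ofReal (f' y) * H (f y) := by
    rw [← himg, lintegral_image_1d measurableSet_Ioc
      (fun x _ => (hf x).hasDerivWithinAt) (hmono.injective.injOn) H]
    exact lintegral_congr fun y => by rw [abs_of_pos (hpos y)]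
  rw [← e1]
  have per : Function.Periodic H (2 * Real.pi) := hH
  have e2 : ∫⁻ y in Set.Ioc (f 0) (f 0 + 2 * Real.pi), H y
      = ∫⁻ b : AddCircle (2 * Real.pi), per.lift b := by
    rw [← AddCircle.lintegral_preimage (2 * Real.pi) (f 0) per.lift]
    exact lintegral_congr fun y => (per.lift_coe y).symm
  have e3 : ∫⁻ y in Set.Ioc 0 (2 * Real.pi), H y
      = ∫⁻ b : AddCircle (2 * Real.pi), per.lift b := by
    rw [← AddCircle.lintegral_preimage (2 * Real.pi) 0 per.lift]
    rw [zero_add]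
    exact lintegral_congr fun y => (per.lift_coe y).symm
  rw [e2, e3]

lemma ofReal_div_jac {N d1 Dx Dy : ℝ} (hDx : 0 < Dx) (hDy : 0 < Dy) (hd1 : 0 ≤ d1) :
    ENNReal.ofReal (N / d1) =
      ENNReal.ofReal Dx * ENNReal.ofReal Dy * ENNReal.ofReal (N / (Dx * Dy * d1)) := by
  rcases eq_or_lt_of_le hd1 with h | h
  · rw [← h]
    simp
  · rw [← ENNReal.ofReal_mul hDx.le, ← ENNReal.ofReal_mul (by positivity)]
    congr 1
    field_simp

end ConfInvAux

/-- the half Dirichlet energy on the circle is invariant under traces of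
Möbius transformations of the disc: `E(u ∘ m) = E(u)`. -/
theorem circEnergy_conformal_invariance {k : ℕ} (a μ : ℂ) (ha : ‖a‖ < 1)
    (hμ : ‖μ‖ = 1) (u : ℂ → Fin k → ℝ)
    (hmeas : Measurable (fun θ : ℝ => u (Complex.exp (Complex.I * (θ : ℂ))))) :
    circEnergy (fun w => u (μ * (w - a) / (starRingEnd ℂ a * w - 1))) = circEnergy u := by
  classical
  have hne : ∀ θ : ℝ, ConfInvAux.hh a θ ≠ 0 := ConfInvAux.hh_ne ha
  have hslit : ∀ θ : ℝ, ConfInvAux.hh a θ ∈ Complex.slitPlane := ConfInvAux.hh_slit ha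
  have hexp := ConfInvAux.exp_psi (a := a) (μ := μ) ha hμ hne
  have hder : ∀ θ, HasDerivAt (ConfInvAux.psi a μ) (ConfInvAux.DD a θ) θ :=
    ConfInvAux.hasDerivAt_psi μ hslit hne
  have hDpos : ∀ θ, 0 < ConfInvAux.DD a θ := ConfInvAux.DD_pos ha
  have hjac := ConfInvAux.jacobian_identity (a := a) (μ := μ) hμ hne hexp
  set ψ : ℝ → ℝ := ConfInvAux.psi a μ with hψdef
  set D : ℝ → ℝ := ConfInvAux.DD a with hDdef
  set F : ℝ × ℝ → ℝ≥0∞ := fun p => ENNReal.ofReal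
      ((∑ j, (u (Complex.exp (Complex.I * (p.1 : ℂ))) j
          - u (Complex.exp (Complex.I * (p.2 : ℂ))) j) ^ 2) /
        ‖Complex.exp (Complex.I * (p.1 : ℂ))
          - Complex.exp (Complex.I * (p.2 : ℂ))‖ ^ 2) with hFdef
  have hFmeas : Measurable F := by
    apply Measurable.ennreal_ofReal
    apply Measurable.div
    · apply Finset.measurable_sum
      intro j _
      exact (((measurable_pi_apply j).comp (hmeas.comp measurable_fst)).sub
        ((measurable_pi_apply j).comp (hmeas.comp measurable_snd))).pow_const 2
    · apply Continuous.measurable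
      apply Continuous.pow
      apply continuous_norm.comp
      fun_prop
  have hFper1 : ∀ c t : ℝ, F (t + 2 * Real.pi, c) = F (t, c) := by
    intro c t
    simp only [hFdef]
    rw [ConfInvAux.hexp_per t]
  have hFper2 : ∀ c t : ℝ, F (c, t + 2 * Real.pi) = F (c, t) := by
    intro c t
    simp only [hFdef]
    rw [ConfInvAux.hexp_per t]
  have hpoint : ∀ p : ℝ × ℝ,
      ENNReal.ofReal ((∑ j, (u (μ * (Complex.exp (Complex.I * (p.1 : ℂ)) - a)
              / (starRingEnd ℂ a * Complex.exp (Complex.I * (p.1 : ℂ)) - 1)) j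
          - u (μ * (Complex.exp (Complex.I * (p.2 : ℂ)) - a)
              / (starRingEnd ℂ a * Complex.exp (Complex.I * (p.2 : ℂ)) - 1)) j) ^ 2) /
        ‖Complex.exp (Complex.I * (p.1 : ℂ))
          - Complex.exp (Complex.I * (p.2 : ℂ))‖ ^ 2)
      = ENNReal.ofReal (D p.1) * ENNReal.ofReal (D p.2) * F (ψ p.1, ψ p.2) := by
    intro p
    rw [← hexp p.1, ← hexp p.2]
    have e := ConfInvAux.ofReal_div_jac
      (N := ∑ j, (u (Complex.exp (Complex.I * ((ψ p.1 : ℝ) : ℂ))) j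
          - u (Complex.exp (Complex.I * ((ψ p.2 : ℝ) : ℂ))) j) ^ 2)
      (d1 := ‖Complex.exp (Complex.I * (p.1 : ℂ))
          - Complex.exp (Complex.I * (p.2 : ℂ))‖ ^ 2)
      (hDpos p.1) (hDpos p.2) (sq_nonneg _)
    rw [← hjac p.1 p.2] at e
    rw [e]
  have hψdiff : Differentiable ℝ ψ := fun x => (hder x).differentiableAt
  have hψcont : Continuous ψ := hψdiff.continuous
  have hDcont : Continuous D := by
    rw [hDdef]
    unfold ConfInvAux.DD
    exact continuous_const.div (Complex.continuous_normSq.comp (ConfInvAux.continuous_hh a))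
      (fun x => (Complex.normSq_pos.2 (hne x)).ne')
  have hGmeas : Measurable (fun p : ℝ × ℝ =>
      ENNReal.ofReal (D p.1) * ENNReal.ofReal (D p.2) * F (ψ p.1, ψ p.2)) := by
    refine Measurable.mul (M := ℝ≥0∞) (Measurable.mul (M := ℝ≥0∞) ?_ ?_) ?_
    · exact ((hDcont.comp continuous_fst).measurable).ennreal_ofReal
    · exact ((hDcont.comp continuous_snd).measurable).ennreal_ofReal
    · exact hFmeas.comp (((hψcont.comp continuous_fst).prodMk
        (hψcont.comp continuous_snd)).measurable)
  have hpsiper := ConfInvAux.psi_per a μ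
  have key : ∫⁻ p : ℝ × ℝ in (Set.Ioc (0:ℝ) (2 * Real.pi)) ×ˢ (Set.Ioc (0:ℝ) (2 * Real.pi)),
      (ENNReal.ofReal (D p.1) * ENNReal.ofReal (D p.2) * F (ψ p.1, ψ p.2))
      = ∫⁻ p : ℝ × ℝ in (Set.Ioc (0:ℝ) (2 * Real.pi)) ×ˢ (Set.Ioc (0:ℝ) (2 * Real.pi)), F p := by
    rw [MeasureTheory.Measure.volume_eq_prod, ← Measure.prod_restrict]
    rw [lintegral_prod _ hGmeas.aemeasurable, lintegral_prod _ hFmeas.aemeasurable]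
    calc ∫⁻ x in Set.Ioc (0:ℝ) (2 * Real.pi), ∫⁻ y in Set.Ioc (0:ℝ) (2 * Real.pi), ENNReal.ofReal (D x) * ENNReal.ofReal (D y) * F (ψ x, ψ y)
        = ∫⁻ x in Set.Ioc (0:ℝ) (2 * Real.pi), ENNReal.ofReal (D x) * ((fun c => ∫⁻ y in Set.Ioc (0:ℝ) (2 * Real.pi), F (c, y)) (ψ x)) := by
          refine lintegral_congr fun x => ?_
          simp only []
          rw [← ConfInvAux.cov_periodic hder hDpos hpsiper (fun c => F (ψ x, c)) (hFper2 (ψ x))]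
          rw [← lintegral_const_mul' _ _ ENNReal.ofReal_ne_top]
          exact lintegral_congr fun y => (mul_assoc _ _ _)
      _ = ∫⁻ x in Set.Ioc (0:ℝ) (2 * Real.pi), (fun c => ∫⁻ y in Set.Ioc (0:ℝ) (2 * Real.pi), F (c, y)) x :=
          ConfInvAux.cov_periodic hder hDpos hpsiper
            (fun c => ∫⁻ y in Set.Ioc (0:ℝ) (2 * Real.pi), F (c, y))
            (fun t => lintegral_congr fun y => hFper1 y t)
      _ = ∫⁻ x in Set.Ioc (0:ℝ) (2 * Real.pi), ∫⁻ y in Set.Ioc (0:ℝ) (2 * Real.pi), F (x, y) := rfl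
  simp only [circEnergy]
  congr 1
  calc (∫⁻ p : ℝ × ℝ in (Set.Ioc (0:ℝ) (2 * Real.pi)) ×ˢ (Set.Ioc (0:ℝ) (2 * Real.pi)),
        ENNReal.ofReal ((∑ j, (u (μ * (Complex.exp (Complex.I * (p.1 : ℂ)) - a)
              / (starRingEnd ℂ a * Complex.exp (Complex.I * (p.1 : ℂ)) - 1)) j
          - u (μ * (Complex.exp (Complex.I * (p.2 : ℂ)) - a)
              / (starRingEnd ℂ a * Complex.exp (Complex.I * (p.2 : ℂ)) - 1)) j) ^ 2) /
        ‖Complex.exp (Complex.I * (p.1 : ℂ))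
          - Complex.exp (Complex.I * (p.2 : ℂ))‖ ^ 2))
      = ∫⁻ p : ℝ × ℝ in (Set.Ioc (0:ℝ) (2 * Real.pi)) ×ˢ (Set.Ioc (0:ℝ) (2 * Real.pi)),
          (ENNReal.ofReal (D p.1) * ENNReal.ofReal (D p.2) * F (ψ p.1, ψ p.2)) :=
        lintegral_congr hpoint
    _ = ∫⁻ p : ℝ × ℝ in (Set.Ioc (0:ℝ) (2 * Real.pi)) ×ˢ (Set.Ioc (0:ℝ) (2 * Real.pi)), F p := key
end
end

section
/- For every smooth 2π-periodic function u : ℝ → ℝ^k and all real numbers α, β, γ: ∫₀^{2π} u'(θ) · (-Δ)^{1/2}u(θ) · (α + β cos θ + γ sin θ) dθ = 0. In particular, ∫₀^{2π} u'·(-Δ)^{1/2}u dθ = 0 and ∫₀^{2π} u'(θ)·(-Δ)^{1/2}u(θ) sin(δ−θ) dθ = 0 for every δ ∈ ℝ. -/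
open scoped Real ENNReal
open Complex MeasureTheory

noncomputable section

namespace PohozaevAux

lemma twopi_pos : (0:ℝ) < 2 * Real.pi := by positivity

lemma contE (n : ℤ) : Continuous fun θ : ℝ => Complex.exp (Complex.I * n * θ) :=
  Complex.continuous_exp.comp (continuous_const.mul Complex.continuous_ofReal)

lemma contEneg (n : ℤ) : Continuous fun θ : ℝ => Complex.exp (-(Complex.I * n * θ)) :=
  Complex.continuous_exp.comp (continuous_const.mul Complex.continuous_ofReal).neg

lemma normE (n : ℤ) (θ : ℝ) : ‖Complex.exp (Complex.I * n * θ)‖ = 1 := by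
  rw [show Complex.I * n * θ = ((n * θ : ℝ) : ℂ) * Complex.I by push_cast; ring,
    Complex.norm_exp_ofReal_mul_I]

lemma normEneg (n : ℤ) (θ : ℝ) : ‖Complex.exp (-(Complex.I * n * θ))‖ = 1 := by
  rw [show -(Complex.I * n * θ) = ((-(n * θ) : ℝ) : ℂ) * Complex.I by push_cast; ring,
    Complex.norm_exp_ofReal_mul_I]

lemma norm_fCoefS_le (f : ℝ → ℝ) (C : ℝ) (hC0 : 0 ≤ C)
    (hC : ∀ θ ∈ Set.uIcc (0:ℝ) (2 * Real.pi), |f θ| ≤ C) (n : ℤ) :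
    ‖fCoefS f n‖ ≤ C := by
  unfold fCoefS
  rw [norm_mul]
  have h1 : ‖(1 / (2 * Real.pi) : ℂ)‖ = 1 / (2 * Real.pi) := by
    rw [show (1 / (2 * Real.pi) : ℂ) = ((1 / (2 * Real.pi) : ℝ) : ℂ) by push_cast; ring,
      Complex.norm_real]
    exact abs_of_pos (by positivity)
  have h2 : ‖∫ θ in (0:ℝ)..(2 * Real.pi), (f θ : ℂ) * Complex.exp (-(Complex.I * n * θ))‖
      ≤ C * |2 * Real.pi - 0| := by
    apply intervalIntegral.norm_integral_le_of_norm_le_const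
    intro x hx
    rw [norm_mul, normEneg, mul_one, Complex.norm_real]
    exact hC x (Set.uIoc_subset_uIcc hx)
  rw [h1]
  refine le_trans (mul_le_mul_of_nonneg_left h2 (by positivity)) ?_
  rw [sub_zero, _root_.abs_of_pos twopi_pos]
  have hval : (1 / (2 * Real.pi)) * (C * (2 * Real.pi)) = C := by
    field_simp
  rw [hval]

lemma fCoefS_conj (f : ℝ → ℝ) (n : ℤ) :
    (starRingEnd ℂ) (fCoefS f n) = fCoefS f (-n) := by
  unfold fCoefS
  rw [map_mul]
  congr 1
  · rw [show (1 / (2 * Real.pi) : ℂ) = ((1 / (2 * Real.pi) : ℝ) : ℂ) by push_cast; ring,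
      Complex.conj_ofReal]
  · rw [intervalIntegral.integral_of_le twopi_pos.le,
      intervalIntegral.integral_of_le twopi_pos.le, ← integral_conj]
    congr 1
    funext θ
    rw [map_mul, Complex.conj_ofReal, ← Complex.exp_conj]
    congr 2
    simp only [map_neg, map_mul, Complex.conj_I, Complex.conj_ofReal, map_intCast]
    push_cast
    ring

lemma norm_fCoefS_neg (f : ℝ → ℝ) (n : ℤ) : ‖fCoefS f (-n)‖ = ‖fCoefS f n‖ := by
  rw [← fCoefS_conj, RCLike.norm_conj]

lemma fCoefS_deriv (f : ℝ → ℝ) (hf : ContDiff ℝ (⊤:ℕ∞) f)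
    (hper : Function.Periodic f (2 * Real.pi)) (n : ℤ) :
    fCoefS (deriv f) n = Complex.I * n * fCoefS f n := by
  have hd : Continuous (deriv f) := hf.continuous_deriv (by exact_mod_cast le_top)
  have hc : Continuous f := hf.continuous
  have hA : IntervalIntegrable (fun θ : ℝ => ((deriv f θ : ℝ) : ℂ) * Complex.exp (-(Complex.I * n * θ)))
      MeasureTheory.volume 0 (2 * Real.pi) :=
    ((Complex.continuous_ofReal.comp hd).mul (contEneg n)).intervalIntegrable _ _
  have hB : IntervalIntegrable
      (fun θ : ℝ => (f θ : ℂ) * (Complex.exp (-(Complex.I * n * θ)) * (-(Complex.I * n))))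
      MeasureTheory.volume 0 (2 * Real.pi) :=
    ((Complex.continuous_ofReal.comp hc).mul ((contEneg n).mul continuous_const)).intervalIntegrable _ _
  have hvv : ∀ x : ℝ, HasDerivAt (fun θ : ℝ => Complex.exp (-(Complex.I * n * θ)))
      (Complex.exp (-(Complex.I * n * x)) * (-(Complex.I * n))) x := by
    intro x
    have h1 : HasDerivAt (fun θ : ℝ => (θ : ℂ)) 1 x := by
      simpa using (hasDerivAt_id x).ofReal_comp
    have h0 : HasDerivAt (fun θ : ℝ => -(Complex.I * n * (θ : ℂ))) (-(Complex.I * n)) x := by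
      have h := (h1.const_mul (Complex.I * (n : ℂ))).neg
      rw [mul_one] at h
      exact h
    exact h0.cexp
  have key := intervalIntegral.integral_deriv_mul_eq_sub_of_hasDerivAt
    (a := (0:ℝ)) (b := 2 * Real.pi)
    (u := fun θ : ℝ => (f θ : ℂ)) (v := fun θ : ℝ => Complex.exp (-(Complex.I * n * θ)))
    (u' := fun θ : ℝ => ((deriv f θ : ℝ) : ℂ))
    (v' := fun θ : ℝ => Complex.exp (-(Complex.I * n * θ)) * (-(Complex.I * n)))
    (Complex.continuous_ofReal.comp hc).continuousOn (contEneg n).continuousOn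
    (fun x _ => ((hf.differentiable (by simp) x).hasDerivAt).ofReal_comp)
    (fun x _ => hvv x)
    ((Complex.continuous_ofReal.comp hd).intervalIntegrable _ _)
    (((contEneg n).mul continuous_const).intervalIntegrable _ _)
  have hf2 : f (2 * Real.pi) = f 0 := by simpa using hper 0
  have he2 : Complex.exp (-(Complex.I * n * ((2 * Real.pi : ℝ) : ℂ))) = 1 := by
    rw [show -(Complex.I * n * ((2 * Real.pi : ℝ) : ℂ))
        = ((-n : ℤ) : ℂ) * (2 * (Real.pi : ℂ) * Complex.I) by push_cast; ring]
    exact Complex.exp_int_mul_two_pi_mul_I _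
  rw [hf2] at key
  simp only [Complex.ofReal_zero, mul_zero, neg_zero, Complex.exp_zero, mul_one] at key
  rw [show ((2 * Real.pi : ℝ) : ℂ) = ((2 * Real.pi : ℝ) : ℂ) from rfl] at key
  rw [he2] at key
  simp only [mul_one, sub_self] at key
  rw [intervalIntegral.integral_add hA hB] at key
  have hBe : (∫ θ in (0:ℝ)..(2 * Real.pi),
      (f θ : ℂ) * (Complex.exp (-(Complex.I * n * θ)) * (-(Complex.I * n))))
      = (∫ θ in (0:ℝ)..(2 * Real.pi), (f θ : ℂ) * Complex.exp (-(Complex.I * n * θ)))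
        * (-(Complex.I * n)) := by
    rw [← intervalIntegral.integral_mul_const]
    congr 1
    funext θ
    ring
  rw [hBe] at key
  unfold fCoefS
  linear_combination (1 / (2 * Real.pi) : ℂ) * key

lemma periodic_deriv {f : ℝ → ℝ} (hper : Function.Periodic f (2 * Real.pi)) :
    Function.Periodic (deriv f) (2 * Real.pi) := by
  intro x
  have h : (fun y : ℝ => f (y + 2 * Real.pi)) = f := funext fun y => hper y
  rw [show deriv f (x + 2 * Real.pi) = deriv (fun y : ℝ => f (y + 2 * Real.pi)) x from
    (deriv_comp_add_const _ _ _).symm, h]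

lemma fCoefS_bound_cube (f : ℝ → ℝ) (hf : ContDiff ℝ (⊤:ℕ∞) f)
    (hper : Function.Periodic f (2 * Real.pi)) :
    ∃ C : ℝ, 0 ≤ C ∧ ∀ n : ℤ, |(n : ℝ)| ^ 3 * ‖fCoefS f n‖ ≤ C := by
  have hf1 : ContDiff ℝ (⊤:ℕ∞) (deriv f) := (contDiff_infty_iff_deriv.mp hf).2
  have hf2 : ContDiff ℝ (⊤:ℕ∞) (deriv (deriv f)) := (contDiff_infty_iff_deriv.mp hf1).2
  have hp1 : Function.Periodic (deriv f) (2 * Real.pi) := periodic_deriv hper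
  have hp2 : Function.Periodic (deriv (deriv f)) (2 * Real.pi) := periodic_deriv hp1
  have hc3 : Continuous (deriv (deriv (deriv f))) := hf2.continuous_deriv (by exact_mod_cast le_top)
  obtain ⟨C, hC⟩ := (isCompact_uIcc (a := (0:ℝ)) (b := 2 * Real.pi)).exists_bound_of_continuousOn
    hc3.continuousOn
  refine ⟨max C 0, le_max_right _ _, fun n => ?_⟩
  have h3 : fCoefS (deriv (deriv (deriv f))) n
      = Complex.I * n * (Complex.I * n * (Complex.I * n * fCoefS f n)) := by
    rw [fCoefS_deriv _ hf2 hp2, fCoefS_deriv _ hf1 hp1, fCoefS_deriv _ hf hper]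
  have hnorm : ‖fCoefS (deriv (deriv (deriv f))) n‖ = |(n : ℝ)| ^ 3 * ‖fCoefS f n‖ := by
    rw [h3]
    simp only [norm_mul, Complex.norm_I, Complex.norm_intCast]
    ring
  rw [← hnorm]
  exact le_trans (norm_fCoefS_le _ (max C 0) (le_max_right _ _)
    (fun θ hθ => le_trans (hC θ hθ) (le_max_left _ _)) n) le_rfl

lemma summable_mul_decay (A : ℤ → ℝ) (hA0 : ∀ n, 0 ≤ A n) (C : ℝ)
    (hC : ∀ n : ℤ, |(n : ℝ)| ^ 3 * A n ≤ C) :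
    Summable fun n : ℤ => |(n : ℝ)| * A n := by
  have hs : Summable (fun n : ℤ => C * (1 / (n : ℝ) ^ 2)) :=
    (Real.summable_one_div_int_pow.mpr one_lt_two).mul_left C
  refine Summable.of_nonneg_of_le (fun n => mul_nonneg (abs_nonneg _) (hA0 n)) (fun n => ?_) hs
  rcases eq_or_ne n 0 with rfl | hn
  · simp
  · have hne : ((n : ℝ)) ≠ 0 := Int.cast_ne_zero.mpr hn
    have hn2 : (0:ℝ) < (n : ℝ) ^ 2 := by positivity
    have hiden : |(n : ℝ)| * A n = (|(n : ℝ)| ^ 3 * A n) / (n : ℝ) ^ 2 := by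
      rw [show |(n : ℝ)| ^ 3 = (n : ℝ) ^ 2 * |(n : ℝ)| by rw [← _root_.sq_abs]; ring]
      field_simp
    rw [hiden, mul_one_div]
    gcongr
    exact hC n

lemma mul_le_of_cube (A : ℤ → ℝ) (hA0 : ∀ n, 0 ≤ A n) (C : ℝ) (hC0 : 0 ≤ C)
    (hC : ∀ n : ℤ, |(n : ℝ)| ^ 3 * A n ≤ C) (n : ℤ) : |(n : ℝ)| * A n ≤ C := by
  rcases eq_or_ne n 0 with rfl | hn
  · simpa using hC0
  · have h1 : (1:ℝ) ≤ |(n : ℝ)| := by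
      have h1' : (1:ℤ) ≤ |n| := by
        rcases lt_or_gt_of_ne hn with h | h
        · rw [_root_.abs_of_neg h]; omega
        · rw [_root_.abs_of_pos h]; omega
      exact_mod_cast h1'
    calc |(n : ℝ)| * A n ≤ |(n : ℝ)| ^ 3 * A n := by
          apply mul_le_mul_of_nonneg_right _ (hA0 n)
          nlinarith [mul_nonneg (mul_nonneg (abs_nonneg (n:ℝ)) (sub_nonneg.mpr h1))
            (by positivity : (0:ℝ) ≤ |(n:ℝ)| + 1)]
      _ ≤ C := hC n

lemma int_abs_id {m : ℤ} (hm : |m| ≤ 1) (n : ℤ) : |n| * (n + m) = n * |n + m| := by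
  have hm' := abs_le.mp hm
  rcases lt_trichotomy n 0 with h | h | h
  · rw [_root_.abs_of_neg h, _root_.abs_of_nonpos (by omega)]; ring
  · simp [h]
  · rw [_root_.abs_of_pos h, _root_.abs_of_nonneg (by omega)]

lemma tsum_pair_zero {F : ℤ → ℂ} (m : ℤ) (hF : Summable F)
    (hpair : ∀ n, F n + F (-n - m) = 0) : ∑' n, F n = 0 := by
  have hinv : Function.Involutive (fun n : ℤ => -n - m) := fun n => by ring
  have hσ : Summable (fun n : ℤ => F (-n - m)) := by
    have := ((hinv.toPerm _).summable_iff (f := F)).mpr hF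
    exact this
  have h1 : (∑' n : ℤ, F (-n - m)) = ∑' n, F n := by
    have := (hinv.toPerm _).tsum_eq F
    simpa using this
  have h2 : (∑' n : ℤ, (F n + F (-n - m))) = (∑' n, F n) + ∑' n : ℤ, F (-n - m) :=
    Summable.tsum_add hF hσ
  have h3 : (∑' n : ℤ, (F n + F (-n - m))) = 0 := by
    simp only [hpair]
    exact tsum_zero
  rw [h3, h1] at h2
  exact add_self_eq_zero.mp h2.symm

/-- The main scalar lemma. -/
lemma key_integral (f : ℝ → ℝ) (hf : ContDiff ℝ (⊤:ℕ∞) f)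
    (hper : Function.Periodic f (2 * Real.pi)) (m : ℤ) (hm : |m| ≤ 1) :
    ∫ θ in (0:ℝ)..(2 * Real.pi),
      ((deriv f θ : ℝ) : ℂ) * (∑' n : ℤ, ((|n| : ℤ) : ℂ) * fCoefS f n * Complex.exp (Complex.I * n * θ))
        * Complex.exp (Complex.I * m * θ) = 0 := by
  obtain ⟨C, hC0, hC⟩ := fCoefS_bound_cube f hf hper
  have hA0 : ∀ n : ℤ, 0 ≤ ‖fCoefS f n‖ := fun n => norm_nonneg _
  have hsum : Summable (fun n : ℤ => |(n : ℝ)| * ‖fCoefS f n‖) :=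
    summable_mul_decay _ hA0 C hC
  have hbound : ∀ n : ℤ, |(n : ℝ)| * ‖fCoefS f n‖ ≤ C := mul_le_of_cube _ hA0 C hC0 hC
  have hdc : Continuous (deriv f) := hf.continuous_deriv (by exact_mod_cast le_top)
  obtain ⟨M, hM⟩ := (isCompact_uIcc (a := (0:ℝ)) (b := 2 * Real.pi)).exists_bound_of_continuousOn
    hdc.continuousOn
  set g : ℤ → ℝ → ℂ := fun n θ => ((deriv f θ : ℝ) : ℂ)
    * (((|n| : ℤ) : ℂ) * fCoefS f n * Complex.exp (Complex.I * n * θ))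
    * Complex.exp (Complex.I * m * θ) with hg
  have hgnorm : ∀ (n : ℤ) (θ : ℝ), ‖g n θ‖ = |deriv f θ| * (|(n : ℝ)| * ‖fCoefS f n‖) := by
    intro n θ
    rw [hg]
    simp only [norm_mul, normE, Complex.norm_real, Complex.norm_intCast, mul_one,
      Real.norm_eq_abs]
    push_cast [Int.cast_abs, _root_.abs_abs]
    try rw [_root_.abs_abs]
    try ring
  have hrw : ∀ θ : ℝ, ((deriv f θ : ℝ) : ℂ)
      * (∑' n : ℤ, ((|n| : ℤ) : ℂ) * fCoefS f n * Complex.exp (Complex.I * n * θ))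
      * Complex.exp (Complex.I * m * θ) = ∑' n, g n θ := by
    intro θ
    rw [← tsum_mul_left, ← tsum_mul_right]
  have hgcont : ∀ n, Continuous (g n) := fun n =>
    ((Complex.continuous_ofReal.comp hdc).mul
      ((continuous_const.mul continuous_const).mul (contE n))).mul (contE m)
  have hInt : ∀ n : ℤ, MeasureTheory.IntegrableOn (g n) (Set.Ioc 0 (2 * Real.pi))
      MeasureTheory.volume := fun n => (hgcont n).integrableOn_Ioc
  have hSum : Summable fun n : ℤ =>
      ∫ θ in Set.Ioc (0:ℝ) (2 * Real.pi), ‖g n θ‖ ∂MeasureTheory.volume := by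
    refine Summable.of_nonneg_of_le
      (fun n => MeasureTheory.integral_nonneg (fun θ => norm_nonneg _)) (fun n => ?_)
      ((hsum.mul_left M).mul_right (2 * Real.pi))
    have hle : ∀ θ ∈ Set.Ioc (0:ℝ) (2 * Real.pi),
        ‖g n θ‖ ≤ M * (|(n : ℝ)| * ‖fCoefS f n‖) := by
      intro θ hθ
      rw [hgnorm]
      have hmem : θ ∈ Set.uIcc (0:ℝ) (2 * Real.pi) := by
        rw [Set.uIcc_of_le twopi_pos.le]
        exact Set.Ioc_subset_Icc_self hθ
      have := hM θ hmem
      rw [Real.norm_eq_abs] at this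
      exact mul_le_mul_of_nonneg_right this (mul_nonneg (abs_nonneg _) (norm_nonneg _))
    calc (∫ θ in Set.Ioc (0:ℝ) (2 * Real.pi), ‖g n θ‖ ∂MeasureTheory.volume)
        ≤ ∫ _ in Set.Ioc (0:ℝ) (2 * Real.pi), M * (|(n : ℝ)| * ‖fCoefS f n‖)
            ∂MeasureTheory.volume := by
          apply MeasureTheory.setIntegral_mono_on (hInt n).norm
            (MeasureTheory.integrableOn_const (by
              rw [Real.volume_Ioc]; exact ENNReal.ofReal_ne_top))
            measurableSet_Ioc hle
      _ = M * (|(n : ℝ)| * ‖fCoefS f n‖) * (2 * Real.pi) := by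
          rw [MeasureTheory.setIntegral_const, Real.volume_real_Ioc, smul_eq_mul]
          rw [max_eq_left (by nlinarith [Real.pi_pos])]
          ring
  have hval : ∀ n : ℤ, (∫ θ in Set.Ioc (0:ℝ) (2 * Real.pi), g n θ ∂MeasureTheory.volume)
      = (-(2 * Real.pi) * Complex.I)
        * (((|n| * (n + m) : ℤ) : ℂ) * (fCoefS f n * fCoefS f (-n - m))) := by
    intro n
    rw [← intervalIntegral.integral_of_le twopi_pos.le]
    have h1 : ∀ θ : ℝ, g n θ = (((|n| : ℤ) : ℂ) * fCoefS f n)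
        * (((deriv f θ : ℝ) : ℂ) * Complex.exp (-(Complex.I * ((-n - m : ℤ) : ℂ) * θ))) := by
      intro θ
      rw [hg]
      rw [show -(Complex.I * ((-n - m : ℤ) : ℂ) * θ)
          = Complex.I * (n : ℂ) * θ + Complex.I * (m : ℂ) * θ by push_cast; ring,
        Complex.exp_add]
      ring
    rw [show (fun θ => g n θ) = fun θ : ℝ => (((|n| : ℤ) : ℂ) * fCoefS f n)
        * (((deriv f θ : ℝ) : ℂ) * Complex.exp (-(Complex.I * ((-n - m : ℤ) : ℂ) * θ))) from
      funext h1]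
    rw [intervalIntegral.integral_const_mul]
    have h2 : (∫ θ in (0:ℝ)..(2 * Real.pi),
        ((deriv f θ : ℝ) : ℂ) * Complex.exp (-(Complex.I * ((-n - m : ℤ) : ℂ) * θ)))
        = ((2 * Real.pi : ℝ) : ℂ) * fCoefS (deriv f) (-n - m) := by
      unfold fCoefS
      rw [← mul_assoc, show ((2 * Real.pi : ℝ) : ℂ) * (1 / (2 * Real.pi) : ℂ) = 1 by
        have hπ : ((Real.pi : ℂ)) ≠ 0 := Complex.ofReal_ne_zero.mpr Real.pi_ne_zero
        push_cast
        field_simp, one_mul]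
    rw [h2, fCoefS_deriv f hf hper (-n - m)]
    push_cast
    ring
  have hpair : ∀ n : ℤ, (((|n| * (n + m) : ℤ) : ℂ) * (fCoefS f n * fCoefS f (-n - m)))
      + (((|(-n - m)| * ((-n - m) + m) : ℤ) : ℂ)
          * (fCoefS f (-n - m) * fCoefS f (-(-n - m) - m))) = 0 := by
    intro n
    rw [show -(-n - m) - m = n by ring]
    have hz : (|n| * (n + m) + |(-n - m)| * ((-n - m) + m) : ℤ) = 0 := by
      rw [show (-n - m : ℤ) = -(n + m) by ring, abs_neg,
        show (-(n + m) + m : ℤ) = -n by ring]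
      have := int_abs_id hm n
      linarith
    have : (((|n| * (n + m) : ℤ) : ℂ) + ((|(-n - m)| * ((-n - m) + m) : ℤ) : ℂ))
        * (fCoefS f n * fCoefS f (-n - m)) = 0 := by
      rw [show ((|n| * (n + m) : ℤ) : ℂ) + ((|(-n - m)| * ((-n - m) + m) : ℤ) : ℂ)
          = ((|n| * (n + m) + |(-n - m)| * ((-n - m) + m) : ℤ) : ℂ) by push_cast; ring, hz]
      simp
    calc _ = (((|n| * (n + m) : ℤ) : ℂ) + ((|(-n - m)| * ((-n - m) + m) : ℤ) : ℂ))
        * (fCoefS f n * fCoefS f (-n - m)) := by ring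
      _ = 0 := this
  have hFsum : Summable (fun n : ℤ =>
      ((|n| * (n + m) : ℤ) : ℂ) * (fCoefS f n * fCoefS f (-n - m))) := by
    refine Summable.of_norm (Summable.of_nonneg_of_le (fun n => norm_nonneg _)
      (fun n => ?_) (hsum.mul_right C))
    have hneg : ‖fCoefS f (-n - m)‖ = ‖fCoefS f (n + m)‖ := by
      rw [show (-n - m : ℤ) = -(n + m) by ring, norm_fCoefS_neg]
    have h2 : ‖((|n| * (n + m) : ℤ) : ℂ) * (fCoefS f n * fCoefS f (-n - m))‖
        = (|(n : ℝ)| * ‖fCoefS f n‖) * (|((n + m : ℤ) : ℝ)| * ‖fCoefS f (n + m)‖) := by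
      rw [norm_mul, norm_mul, hneg, Complex.norm_intCast]
      push_cast [_root_.abs_mul, _root_.abs_abs]
      ring
    rw [h2]
    exact mul_le_mul_of_nonneg_left (hbound (n + m))
      (mul_nonneg (abs_nonneg _) (norm_nonneg _))
  simp only [hrw]
  rw [intervalIntegral.integral_of_le twopi_pos.le,
    ← MeasureTheory.integral_tsum_of_summable_integral_norm hInt hSum,
    tsum_congr hval, tsum_mul_left, tsum_pair_zero m hFsum hpair, mul_zero]

/-- S is real-valued. -/
lemma S_real (f : ℝ → ℝ) (θ : ℝ) :
    (((∑' n : ℤ, ((|n| : ℤ) : ℂ) * fCoefS f n * Complex.exp (Complex.I * n * θ)).re : ℝ) : ℂ)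
      = ∑' n : ℤ, ((|n| : ℤ) : ℂ) * fCoefS f n * Complex.exp (Complex.I * n * θ) := by
  rw [← Complex.conj_eq_iff_re]
  rw [show (starRingEnd ℂ) (∑' n : ℤ, ((|n| : ℤ) : ℂ) * fCoefS f n
      * Complex.exp (Complex.I * n * θ))
      = ∑' n : ℤ, (starRingEnd ℂ) (((|n| : ℤ) : ℂ) * fCoefS f n
        * Complex.exp (Complex.I * n * θ)) from tsum_star]
  have hterm : ∀ n : ℤ, (starRingEnd ℂ) (((|n| : ℤ) : ℂ) * fCoefS f n
      * Complex.exp (Complex.I * n * θ))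
      = ((|(-n)| : ℤ) : ℂ) * fCoefS f (-n) * Complex.exp (Complex.I * ((-n : ℤ) : ℂ) * θ) := by
    intro n
    rw [map_mul, map_mul, fCoefS_conj, ← Complex.exp_conj, abs_neg]
    congr 1
    · congr 1
      simp
    · congr 1
      simp only [map_mul, Complex.conj_I, Complex.conj_ofReal, map_intCast]
      push_cast
      ring
  rw [tsum_congr hterm]
  have := (Equiv.neg ℤ).tsum_eq (fun n : ℤ =>
    ((|n| : ℤ) : ℂ) * fCoefS f n * Complex.exp (Complex.I * (n : ℂ) * θ))
  simpa using this

end PohozaevAux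

/-- Pohozaev-type identities on the circle: for every smooth 2π-periodic `u`
and every Möbius vector field `α + β cos θ + γ sin θ`, the integral of
`u' · (-Δ)^{1/2}u` against it vanishes; in particular for `X ≡ 1` and `X = sin(δ−θ)`. -/
theorem pohozaev_identities_on_circle {k : ℕ} (u : ℝ → Fin k → ℝ)
    (hu : ContDiff ℝ (⊤ : ℕ∞) u) (hper : Function.Periodic u (2 * Real.pi)) :
    (∀ α β γ : ℝ,
      ∫ θ in (0:ℝ)..(2 * Real.pi),
        dotR (deriv u θ) (halfLap u θ) * (α + β * Real.cos θ + γ * Real.sin θ) = 0) ∧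
    (∫ θ in (0:ℝ)..(2 * Real.pi), dotR (deriv u θ) (halfLap u θ) = 0) ∧
    (∀ δ : ℝ,
      ∫ θ in (0:ℝ)..(2 * Real.pi),
        dotR (deriv u θ) (halfLap u θ) * Real.sin (δ - θ) = 0) := by
  classical
  have hfj : ∀ j : Fin k, ContDiff ℝ (⊤:ℕ∞) (fun θ => u θ j) :=
    fun j => (contDiff_pi.mp hu j).of_le (by simp)
  have hperj : ∀ j : Fin k, Function.Periodic (fun θ => u θ j) (2 * Real.pi) :=
    fun j θ => congrFun (hper θ) j
  have hderiv_eq : ∀ (θ : ℝ) (j : Fin k), deriv u θ j = deriv (fun t => u t j) θ := by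
    intro θ j
    have hd : HasDerivAt u (deriv u θ) θ := (hu.differentiable (by simp) θ).hasDerivAt
    have h2 := ((ContinuousLinearMap.proj j :
      (Fin k → ℝ) →L[ℝ] ℝ).hasFDerivAt.comp_hasDerivAt θ hd).deriv
    simp only [ContinuousLinearMap.proj_apply] at h2
    exact h2.symm
  set S : Fin k → ℝ → ℂ := fun j θ => ∑' n : ℤ,
    ((|n| : ℤ) : ℂ) * fCoefS (fun t => u t j) n * Complex.exp (Complex.I * n * θ) with hS
  have hcast : ∀ θ : ℝ, ((dotR (deriv u θ) (halfLap u θ) : ℝ) : ℂ)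
      = ∑ j, ((deriv (fun t => u t j) θ : ℝ) : ℂ) * S j θ := by
    intro θ
    unfold dotR
    rw [Complex.ofReal_sum]
    refine Finset.sum_congr rfl fun j _ => ?_
    rw [Complex.ofReal_mul, hderiv_eq θ j]
    congr 1
    rw [hS]
    exact PohozaevAux.S_real (fun t => u t j) θ
  have hScont : ∀ j : Fin k, Continuous (S j) := by
    intro j
    obtain ⟨C, hC0, hC⟩ := PohozaevAux.fCoefS_bound_cube (fun t => u t j) (hfj j) (hperj j)
    rw [hS]
    apply continuous_tsum (fun n => (continuous_const.mul continuous_const).mul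
      (PohozaevAux.contE n))
      (PohozaevAux.summable_mul_decay _ (fun n => norm_nonneg _) C hC)
    intro n θ
    simp only [Pi.mul_apply, norm_mul, PohozaevAux.normE, mul_one, Complex.norm_intCast]
    push_cast [Int.cast_abs, _root_.abs_abs]
    exact le_of_eq (by ring)
  have hGcont : Continuous fun θ : ℝ => ∑ j, ((deriv (fun t => u t j) θ : ℝ) : ℂ) * S j θ := by
    apply continuous_finset_sum
    intro j _
    exact (Complex.continuous_ofReal.comp ((hfj j).continuous_deriv (by exact_mod_cast le_top))).mul (hScont j)
  have hXc : Continuous fun θ : ℝ => ((dotR (deriv u θ) (halfLap u θ) : ℝ) : ℂ) :=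
    hGcont.congr fun θ => (hcast θ).symm
  have hJ : ∀ m : ℤ, |m| ≤ 1 → (∫ θ in (0:ℝ)..(2 * Real.pi),
      ((dotR (deriv u θ) (halfLap u θ) : ℝ) : ℂ) * Complex.exp (Complex.I * m * θ)) = 0 := by
    intro m hm
    have hpt : ∀ θ : ℝ, ((dotR (deriv u θ) (halfLap u θ) : ℝ) : ℂ)
        * Complex.exp (Complex.I * m * θ)
        = ∑ j, ((deriv (fun t => u t j) θ : ℝ) : ℂ) * S j θ * Complex.exp (Complex.I * m * θ) := by
      intro θ
      rw [hcast θ, Finset.sum_mul]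
    simp only [hpt]
    rw [intervalIntegral.integral_finset_sum]
    · refine Finset.sum_eq_zero fun j _ => ?_
      rw [hS]
      exact PohozaevAux.key_integral (fun t => u t j) (hfj j) (hperj j) m hm
    · intro j _
      exact (((Complex.continuous_ofReal.comp ((hfj j).continuous_deriv (by exact_mod_cast le_top))).mul
        (hScont j)).mul (PohozaevAux.contE m)).intervalIntegrable _ _
  have main : ∀ α β γ : ℝ, (∫ θ in (0:ℝ)..(2 * Real.pi),
      dotR (deriv u θ) (halfLap u θ) * (α + β * Real.cos θ + γ * Real.sin θ)) = 0 := by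
    intro α β γ
    have hcplx : (((∫ θ in (0:ℝ)..(2 * Real.pi),
        dotR (deriv u θ) (halfLap u θ) * (α + β * Real.cos θ + γ * Real.sin θ)) : ℝ) : ℂ)
        = 0 := by
      rw [← intervalIntegral.integral_ofReal]
      have hpt : ∀ θ : ℝ, ((dotR (deriv u θ) (halfLap u θ)
          * (α + β * Real.cos θ + γ * Real.sin θ) : ℝ) : ℂ)
          = (α : ℂ) * (((dotR (deriv u θ) (halfLap u θ) : ℝ) : ℂ)
              * Complex.exp (Complex.I * ((0:ℤ) : ℂ) * θ))
            + ((β - γ * Complex.I) / 2) * (((dotR (deriv u θ) (halfLap u θ) : ℝ) : ℂ)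
              * Complex.exp (Complex.I * ((1:ℤ) : ℂ) * θ))
            + ((β + γ * Complex.I) / 2) * (((dotR (deriv u θ) (halfLap u θ) : ℝ) : ℂ)
              * Complex.exp (Complex.I * (((-1):ℤ) : ℂ) * θ)) := by
        intro θ
        have he1 : Complex.exp (Complex.I * ((1:ℤ) : ℂ) * θ)
            = Complex.cos θ + Complex.sin θ * Complex.I := by
          rw [show Complex.I * ((1:ℤ) : ℂ) * θ = (θ : ℂ) * Complex.I by push_cast; ring,
            Complex.exp_mul_I]
        have he2 : Complex.exp (Complex.I * (((-1):ℤ) : ℂ) * θ)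
            = Complex.cos θ - Complex.sin θ * Complex.I := by
          rw [show Complex.I * (((-1):ℤ) : ℂ) * θ = ((-θ : ℝ) : ℂ) * Complex.I by
            push_cast; ring, Complex.exp_mul_I]
          push_cast
          rw [Complex.cos_neg, Complex.sin_neg]
          ring
        have he0 : Complex.exp (Complex.I * ((0:ℤ) : ℂ) * θ) = 1 := by
          simp
        rw [he0, he1, he2, Complex.ofReal_mul, Complex.ofReal_add, Complex.ofReal_add,
          Complex.ofReal_mul, Complex.ofReal_mul, Complex.ofReal_cos, Complex.ofReal_sin]
        linear_combination (((dotR (deriv u θ) (halfLap u θ) : ℝ) : ℂ) * γ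
          * Complex.sin θ) * Complex.I_sq
      simp only [hpt]
      rw [intervalIntegral.integral_add, intervalIntegral.integral_add,
        intervalIntegral.integral_const_mul, intervalIntegral.integral_const_mul,
        intervalIntegral.integral_const_mul, hJ 0 (by norm_num), hJ 1 (by norm_num),
        hJ (-1) (by norm_num)]
      · ring
      · exact (continuous_const.mul (hXc.mul (PohozaevAux.contE 0))).intervalIntegrable _ _
      · exact (continuous_const.mul (hXc.mul (PohozaevAux.contE 1))).intervalIntegrable _ _
      · exact ((continuous_const.mul (hXc.mul (PohozaevAux.contE 0))).add
          (continuous_const.mul (hXc.mul (PohozaevAux.contE 1)))).intervalIntegrable _ _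
      · exact (continuous_const.mul (hXc.mul (PohozaevAux.contE (-1)))).intervalIntegrable _ _
    exact_mod_cast hcplx
  refine ⟨main, ?_, ?_⟩
  · have := main 1 0 0
    simpa using this
  · intro δ
    have hmain := main 0 (Real.sin δ) (-Real.cos δ)
    calc (∫ θ in (0:ℝ)..(2 * Real.pi),
          dotR (deriv u θ) (halfLap u θ) * Real.sin (δ - θ))
        = ∫ θ in (0:ℝ)..(2 * Real.pi), dotR (deriv u θ) (halfLap u θ)
            * (0 + Real.sin δ * Real.cos θ + (-Real.cos δ) * Real.sin θ) := by
          apply intervalIntegral.integral_congr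
          intro θ _
          simp only [Real.sin_sub]
          ring
      _ = 0 := hmain
end
end
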